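/- arXiv:2402.15133 — 3 statements merged into one kernel-verified Lean document; each statement's English description precedes it below -/
import Mathlib

section
/- Let Ω ⊂ ℝ^N be a bounded open set and h : Ω → ℝ continuous with 1 ≤ h⁻ ≤ h⁺ < ∞. Suppose (u_n) is a bounded sequence in L^{h(·)}(Ω) and u_n(x) → u(x) for a.e. x ∈ Ω. Then lim_{n→∞} ( ∫_Ω |u_n|^{h(x)} dx − ∫_Ω |u − u_n|^{h(x)} dx ) = ∫_Ω |u|^{h(x)} dx. -/
open MeasureTheory Filter Topology

/-!
For every `ε > 0` there is `C_ε` with `||a + b|^p - |a|^p| ≤ ε |a|^p + C_ε |b|^p` uniformly in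
`p ∈ (0, P]`. Taking `a = u_n - u`, `b = u`, the positive part of
`||u_n|^p - |u - u_n|^p - |u|^p| - ε |u - u_n|^p` is dominated by `(C_ε + 1) |u|^p`, which is
integrable by Fatou's lemma, and tends to `0` a.e.; by dominated convergence its integral tends to
`0`, and what remains is at most `ε` times the uniformly bounded modulars of `u - u_n`. A bound on
the Luxemburg norms bounds the modulars because `p ≤ P`.
-/

/-- The modular `ρ_p(u) = ∫ |u|^{p(x)} dμ` of variable exponent Lebesgue spaces. -/
noncomputable def modular {α : Type*} [MeasurableSpace α] (μ : Measure α)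
    (p : α → ℝ) (u : α → ℝ) : ℝ :=
  ∫ x, |u x| ^ p x ∂μ

/-- The Luxemburg norm `‖u‖_{p(·)} = inf {τ > 0 : ∫ (|u|/τ)^{p(x)} dμ ≤ 1}`. -/
noncomputable def luxNorm {α : Type*} [MeasurableSpace α] (μ : Measure α)
    (p : α → ℝ) (u : α → ℝ) : ℝ :=
  sInf {τ : ℝ | 0 < τ ∧ ∫ x, (|u x| / τ) ^ p x ∂μ ≤ 1}

theorem add_rpow_le_of_pos {P p δ a b : ℝ} (hp : p ∈ Set.Icc 0 P) (hδ : 0 < δ)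
    (ha : 0 ≤ a) (hb : 0 ≤ b) :
    (a + b) ^ p ≤ (1 + δ) ^ P * a ^ p + ((1 + δ) / δ) ^ P * b ^ p := by
  obtain ⟨hp0, hpP⟩ := hp
  have hab_a : 0 ≤ (1 + δ) ^ P * a ^ p := by positivity
  have hab_b : 0 ≤ ((1 + δ) / δ) ^ P * b ^ p := by positivity
  rcases le_or_gt b (δ * a) with hba | hab
  · calc (a + b) ^ p ≤ ((1 + δ) * a) ^ p := by gcongr; linarith
      _ = (1 + δ) ^ p * a ^ p := Real.mul_rpow (by positivity) ha
      _ ≤ (1 + δ) ^ P * a ^ p := by gcongr; linarith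
      _ ≤ _ := le_add_of_nonneg_right hab_b
  · calc (a + b) ^ p ≤ ((1 + δ) / δ * b) ^ p := by
          gcongr; rw [div_mul_eq_mul_div, le_div_iff₀ hδ]; linarith
      _ = ((1 + δ) / δ) ^ p * b ^ p := Real.mul_rpow (by positivity) hb
      _ ≤ ((1 + δ) / δ) ^ P * b ^ p := by
          gcongr
          · rw [le_div_iff₀ hδ]; linarith
      _ ≤ _ := le_add_of_nonneg_left hab_a

theorem exists_add_rpow_le (P : ℝ) {ε : ℝ} (hε : 0 < ε) :
    ∃ C : ℝ, 0 ≤ C ∧ ∀ p ∈ Set.Icc 0 P, ∀ a b : ℝ, 0 ≤ a → 0 ≤ b →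
      (a + b) ^ p ≤ (1 + ε) * a ^ p + C * b ^ p := by
  set Q := max P 1
  have hQ : 0 < Q := lt_max_of_lt_right one_pos
  set δ := (1 + ε) ^ Q⁻¹ - 1
  have hδ : 0 < δ := sub_pos.2 (Real.one_lt_rpow (by linarith) (inv_pos.2 hQ))
  have hδQ : (1 + δ) ^ Q = 1 + ε := by
    rw [add_sub_cancel, ← Real.rpow_mul (by linarith), inv_mul_cancel₀ hQ.ne', Real.rpow_one]
  refine ⟨((1 + δ) / δ) ^ Q, by positivity, fun p hp a b ha hb => ?_⟩
  rw [← hδQ]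
  exact add_rpow_le_of_pos ⟨hp.1, hp.2.trans (le_max_left _ _)⟩ hδ ha hb

theorem exists_abs_abs_add_rpow_sub_abs_rpow_le (P : ℝ) {ε : ℝ} (hε : 0 < ε) :
    ∃ C : ℝ, ∀ p ∈ Set.Icc 0 P, ∀ x y : ℝ,
      |(|x + y| ^ p - |x| ^ p)| ≤ ε * |x| ^ p + C * |y| ^ p := by
  obtain ⟨C, hC0, hC⟩ := exists_add_rpow_le P hε
  refine ⟨C, fun p hp x y => abs_sub_le_iff.2 ⟨?_, ?_⟩⟩
  · have := hC p hp _ _ (abs_nonneg x) (abs_nonneg y)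
    have : |x + y| ^ p ≤ (|x| + |y|) ^ p := by gcongr; exacts [hp.1, abs_add_le x y]
    linarith
  · -- the same inequality for `x = (x + y) + (-y)`, divided by `1 + ε`
    have := hC p hp _ _ (abs_nonneg (x + y)) (abs_nonneg y)
    have : |x| ^ p ≤ (|x + y| + |y|) ^ p := by
      gcongr; exacts [hp.1, by simpa using abs_add_le (x + y) (-y)]
    have : 0 ≤ ε * |x| ^ p + C * |y| ^ p := by positivity
    by_contra! hlt
    nlinarith [mul_pos hε (by linarith : 0 < |x| ^ p - |x + y| ^ p)]

theorem exists_abs_rpow_sub_rpow_sub_rpow_le (P : ℝ) {ε : ℝ} (hε : 0 < ε) :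
    ∃ C : ℝ, ∀ p ∈ Set.Icc 0 P, ∀ a b : ℝ,
      |(|a| ^ p - |b - a| ^ p - |b| ^ p)| ≤ ε * |b - a| ^ p + C * |b| ^ p := by
  obtain ⟨C, hC⟩ := exists_abs_abs_add_rpow_sub_abs_rpow_le P hε
  refine ⟨C + 1, fun p hp a b => ?_⟩
  have hkey := hC p hp (a - b) b
  rw [sub_add_cancel, abs_sub_comm a] at hkey
  have := abs_sub (|a| ^ p - |b - a| ^ p) (|b| ^ p)
  rw [abs_of_nonneg (Real.rpow_nonneg (abs_nonneg b) p)] at this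
  linarith

section

variable {α : Type*} [MeasurableSpace α] {μ : Measure α} {p : α → ℝ} {P : ℝ}

theorem integrable_of_tendsto_ae_of_integral_norm_le {E : Type*} [NormedAddCommGroup E]
    {f : ℕ → α → E} {g : α → E} {K : ℝ} (hf : ∀ n, Integrable (f n) μ)
    (hK : ∀ n, ∫ x, ‖f n x‖ ∂μ ≤ K)
    (hlim : ∀ᵐ x ∂μ, Tendsto (fun n => f n x) atTop (𝓝 (g x))) : Integrable g μ := by
  refine ⟨aestronglyMeasurable_of_tendsto_ae _ (fun n => (hf n).1) hlim, ?_⟩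
  calc ∫⁻ x, ‖g x‖ₑ ∂μ = ∫⁻ x, liminf (fun n => ‖f n x‖ₑ) atTop ∂μ :=
        lintegral_congr_ae (hlim.mono fun x hx => hx.enorm.liminf_eq.symm)
    _ ≤ liminf (fun n => ∫⁻ x, ‖f n x‖ₑ ∂μ) atTop :=
        lintegral_liminf_le' fun n => (hf n).1.enorm
    _ ≤ ENNReal.ofReal K := liminf_le_of_frequently_le' <| Frequently.of_forall fun n => by
        rw [← ofReal_integral_norm_eq_lintegral_enorm (hf n)]
        exact ENNReal.ofReal_le_ofReal (hK n)
    _ < ⊤ := ENNReal.ofReal_lt_top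

theorem tendsto_integral_max_abs_sub_zero {F G : ℕ → α → ℝ} {H : α → ℝ}
    (hF : ∀ n, Integrable (F n) μ) (hG : ∀ n, Integrable (G n) μ)
    (hG0 : ∀ n, 0 ≤ᵐ[μ] G n) (hH : Integrable H μ) (hdom : ∀ n, ∀ᵐ x ∂μ, |F n x| ≤ G n x + H x)
    (hlim : ∀ᵐ x ∂μ, Tendsto (fun n => F n x) atTop (𝓝 0)) :
    Tendsto (fun n => ∫ x, max (|F n x| - G n x) 0 ∂μ) atTop (𝓝 0) := by
  have hbound : ∀ n, ∀ᵐ x ∂μ, ‖max (|F n x| - G n x) 0‖ ≤ ‖H x‖ := fun n => by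
    filter_upwards [hdom n] with x hx
    rw [Real.norm_of_nonneg (le_max_right _ _), Real.norm_eq_abs]
    exact max_le (by linarith [le_abs_self (H x)]) (abs_nonneg _)
  have hlim' : ∀ᵐ x ∂μ, Tendsto (fun n => max (|F n x| - G n x) 0) atTop (𝓝 0) := by
    filter_upwards [hlim, ae_all_iff.2 hG0] with x hx hx0
    refine squeeze_zero (fun n => le_max_right _ _) (fun n => ?_) (by simpa using hx.abs)
    exact max_le (sub_le_self _ (hx0 n)) (abs_nonneg _)
  simpa using tendsto_integral_of_dominated_convergence (‖H ·‖)
    (fun n => (((hF n).abs.sub (hG n)).1.sup aestronglyMeasurable_const)) hH.norm hbound hlim'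

theorem tendsto_integral_of_abs_le_mul_add {F G : ℕ → α → ℝ} {L : ℝ}
    (hF : ∀ n, Integrable (F n) μ) (hG : ∀ n, Integrable (G n) μ)
    (hG0 : ∀ n, 0 ≤ᵐ[μ] G n) (hGL : ∀ n, ∫ x, G n x ∂μ ≤ L)
    (hdom : ∀ ε > 0, ∃ H, Integrable H μ ∧ ∀ n, ∀ᵐ x ∂μ, |F n x| ≤ ε * G n x + H x)
    (hlim : ∀ᵐ x ∂μ, Tendsto (fun n => F n x) atTop (𝓝 0)) :
    Tendsto (fun n => ∫ x, F n x ∂μ) atTop (𝓝 0) := by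
  rw [Metric.tendsto_atTop]
  intro δ hδ
  set ε := δ / (2 * (|L| + 1))
  have hε : 0 < ε := by positivity
  have hεL : ε * L < δ / 2 := by
    calc ε * L ≤ ε * |L| := by gcongr; exact le_abs_self L
      _ = δ / 2 * (|L| / (|L| + 1)) := by simp only [ε]; field_simp
      _ < δ / 2 :=
        mul_lt_of_lt_one_right (by positivity) <| (div_lt_one (by positivity)).2 (by linarith)
  obtain ⟨H, hH, hdomε⟩ := hdom ε hε
  obtain ⟨n₀, hn₀⟩ := Metric.tendsto_atTop.1 (tendsto_integral_max_abs_sub_zero hF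
    (fun n => (hG n).const_mul ε) (fun n => (hG0 n).mono fun x hx => mul_nonneg hε.le hx) hH
    hdomε hlim) (δ / 2) (by positivity)
  refine ⟨n₀, fun n hn => ?_⟩
  set W := fun x => max (|F n x| - ε * G n x) 0
  have hW : Integrable W μ := ((hF n).abs.sub ((hG n).const_mul ε)).sup (integrable_zero _ _ _)
  have hWlt : ∫ x, W x ∂μ < δ / 2 := by
    have := hn₀ n hn
    rwa [Real.dist_eq, sub_zero, abs_of_nonneg (integral_nonneg fun x => le_max_right _ _)]
      at this
  rw [Real.dist_eq, sub_zero]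
  calc |∫ x, F n x ∂μ| ≤ ∫ x, |F n x| ∂μ := abs_integral_le_integral_abs
    _ ≤ ∫ x, (W x + ε * G n x) ∂μ :=
        integral_mono (hF n).abs (hW.add ((hG n).const_mul ε)) fun x => by
          linarith [le_max_left (|F n x| - ε * G n x) 0]
    _ = ∫ x, W x ∂μ + ε * ∫ x, G n x ∂μ := by
        rw [integral_add hW ((hG n).const_mul ε), integral_const_mul]
    _ < δ / 2 + δ / 2 :=
        add_lt_add_of_lt_of_le hWlt ((mul_le_mul_of_nonneg_left (hGL n) hε.le).trans hεL.le)
    _ = δ := add_halves δ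


theorem exists_integral_abs_div_rpow_le_one {u : α → ℝ} (hp : ∀ᵐ x ∂μ, 1 ≤ p x)
    (hint : Integrable (fun x => |u x| ^ p x) μ) :
    ∃ σ > 0, ∫ x, (|u x| / σ) ^ p x ∂μ ≤ 1 := by
  set σ := max 1 (modular μ p u)
  have hσ1 : 1 ≤ σ := le_max_left _ _
  have hσ : 0 < σ := one_pos.trans_le hσ1
  refine ⟨σ, hσ, ?_⟩
  calc ∫ x, (|u x| / σ) ^ p x ∂μ ≤ ∫ x, |u x| ^ p x / σ ∂μ := by
        refine integral_mono_of_nonneg (ae_of_all _ fun x => by positivity) (hint.div_const σ) ?_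
        filter_upwards [hp] with x hpx
        rw [Real.div_rpow (abs_nonneg _) hσ.le]
        gcongr
        exact Real.self_le_rpow_of_one_le hσ1 hpx
    _ = modular μ p u / σ := integral_div σ _
    _ ≤ 1 := (div_le_one hσ).2 (le_max_right _ _)

theorem integrable_abs_div_rpow {u : α → ℝ} {σ : ℝ} (hp : ∀ᵐ x ∂μ, p x ∈ Set.Icc 0 P)
    (hpm : AEMeasurable p μ) (hu : AEMeasurable u μ) (hint : Integrable (fun x => |u x| ^ p x) μ)
    (hσ : 0 < σ) : Integrable (fun x => (|u x| / σ) ^ p x) μ := by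
  refine (hint.const_mul (max 1 (σ⁻¹ ^ P))).mono'
    ((hu.abs.div_const σ).pow hpm).aestronglyMeasurable ?_
  filter_upwards [hp] with x ⟨hp0, hpP⟩
  rw [Real.norm_of_nonneg (by positivity), Real.div_rpow (abs_nonneg _) hσ.le, div_eq_inv_mul,
    ← Real.inv_rpow hσ.le]
  gcongr
  rcases le_or_gt σ⁻¹ 1 with hσ1 | hσ1
  · exact (Real.rpow_le_one (by positivity) hσ1 hp0).trans (le_max_left _ _)
  · exact (Real.rpow_le_rpow_of_exponent_le hσ1.le hpP).trans (le_max_right _ _)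

theorem modular_le_of_luxNorm_lt {u : α → ℝ} {τ : ℝ} (hp : ∀ᵐ x ∂μ, p x ∈ Set.Icc 1 P)
    (hpm : AEMeasurable p μ) (hu : AEMeasurable u μ) (hint : Integrable (fun x => |u x| ^ p x) μ)
    (hτ1 : 1 ≤ τ) (hτ : luxNorm μ p u < τ) : modular μ p u ≤ τ ^ P := by
  have hne : {σ : ℝ | 0 < σ ∧ ∫ x, (|u x| / σ) ^ p x ∂μ ≤ 1}.Nonempty :=
    exists_integral_abs_div_rpow_le_one (hp.mono fun x hx => hx.1) hint
  obtain ⟨σ, ⟨hσ, hσ1⟩, hστ⟩ := (csInf_lt_iff ⟨0, fun σ hσ => hσ.1.le⟩ hne).1 hτ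
  have hp0 : ∀ᵐ x ∂μ, p x ∈ Set.Icc 0 P := hp.mono fun x hx => ⟨zero_le_one.trans hx.1, hx.2⟩
  calc modular μ p u ≤ ∫ x, τ ^ P * (|u x| / σ) ^ p x ∂μ := by
        refine integral_mono_of_nonneg (ae_of_all _ fun x => by positivity)
          ((integrable_abs_div_rpow hp0 hpm hu hint hσ).const_mul _) ?_
        filter_upwards [hp] with x ⟨hp1, hpP⟩
        calc |u x| ^ p x = σ ^ p x * (|u x| / σ) ^ p x := by
              rw [Real.div_rpow (abs_nonneg _) hσ.le, mul_div_cancel₀ _ (by positivity)]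
          _ ≤ τ ^ P * (|u x| / σ) ^ p x := by
              gcongr
              calc σ ^ p x ≤ τ ^ p x := by gcongr
                _ ≤ τ ^ P := Real.rpow_le_rpow_of_exponent_le hτ1 hpP
    _ = τ ^ P * ∫ x, (|u x| / σ) ^ p x ∂μ := integral_const_mul _ _
    _ ≤ τ ^ P * 1 := by gcongr
    _ = τ ^ P := mul_one _


theorem exists_modular_sub_le (hp : ∀ᵐ x ∂μ, p x ∈ Set.Icc 0 P) (hpm : AEMeasurable p μ) :
    ∃ C, 0 ≤ C ∧ ∀ u w : α → ℝ, AEMeasurable u μ → AEMeasurable w μ →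
      Integrable (fun x => |u x| ^ p x) μ → Integrable (fun x => |w x| ^ p x) μ →
      Integrable (fun x => |u x - w x| ^ p x) μ ∧
        modular μ p (u - w) ≤ C * (modular μ p u + modular μ p w) := by
  obtain ⟨C₁, -, hC₁⟩ := exists_add_rpow_le P one_pos
  refine ⟨max 2 C₁, zero_le_two.trans (le_max_left _ _), fun u w hu hw hiu hiw => ?_⟩
  have hle : ∀ᵐ x ∂μ, |u x - w x| ^ p x ≤ max 2 C₁ * (|u x| ^ p x + |w x| ^ p x) := by
    filter_upwards [hp] with x hpx
    have hu0 : 0 ≤ |u x| ^ p x := by positivity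
    have hw0 : 0 ≤ |w x| ^ p x := by positivity
    calc |u x - w x| ^ p x ≤ (|u x| + |w x|) ^ p x := by gcongr; exacts [hpx.1, abs_sub _ _]
      _ ≤ (1 + 1) * |u x| ^ p x + C₁ * |w x| ^ p x :=
          hC₁ _ hpx _ _ (abs_nonneg _) (abs_nonneg _)
      _ ≤ max 2 C₁ * (|u x| ^ p x + |w x| ^ p x) := by
          rw [one_add_one_eq_two, mul_add]
          gcongr <;> simp
  have hsum := (hiu.add hiw).const_mul (max 2 C₁)
  have hsub : Integrable (fun x => |u x - w x| ^ p x) μ :=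
    hsum.mono' ((hu.sub hw).abs.pow hpm).aestronglyMeasurable
      (hle.mono fun x hx => by rwa [Real.norm_of_nonneg (by positivity)])
  refine ⟨hsub, ?_⟩
  calc modular μ p (u - w) ≤ ∫ x, max 2 C₁ * (|u x| ^ p x + |w x| ^ p x) ∂μ :=
        integral_mono_ae hsub hsum hle
    _ = max 2 C₁ * (modular μ p u + modular μ p w) := by
        rw [integral_const_mul, integral_add hiu hiw, modular, modular]

theorem tendsto_modular_sub_modular_sub {K : ℝ} {u : ℕ → α → ℝ} {v : α → ℝ}
    (hp : ∀ᵐ x ∂μ, p x ∈ Set.Ioc 0 P) (hpm : AEMeasurable p μ) (hu : ∀ n, AEMeasurable (u n) μ)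
    (hint : ∀ n, Integrable (fun x => |u n x| ^ p x) μ) (hK : ∀ n, modular μ p (u n) ≤ K)
    (hlim : ∀ᵐ x ∂μ, Tendsto (fun n => u n x) atTop (𝓝 (v x))) :
    Tendsto (fun n => modular μ p (u n) - modular μ p (v - u n)) atTop (𝓝 (modular μ p v)) := by
  have hp0 : ∀ᵐ x ∂μ, p x ∈ Set.Icc 0 P := hp.mono fun x hx => Set.Ioc_subset_Icc_self hx
  have hv : AEMeasurable v μ := aemeasurable_of_tendsto_metrizable_ae' hu hlim
  have hvint : Integrable (fun x => |v x| ^ p x) μ := by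
    refine integrable_of_tendsto_ae_of_integral_norm_le (K := K) hint (fun n => ?_) ?_
    · simp only [Real.norm_of_nonneg (Real.rpow_nonneg (abs_nonneg _) _)]
      exact hK n
    · filter_upwards [hlim, hp] with x hx hpx using hx.abs.rpow_const (Or.inr hpx.1.le)
  obtain ⟨C₁, hC₁0, hC₁⟩ := exists_modular_sub_le hp0 hpm
  have hG : ∀ n, Integrable (fun x => |v x - u n x| ^ p x) μ := fun n =>
    (hC₁ v (u n) hv (hu n) hvint (hint n)).1
  have hGL : ∀ n, ∫ x, |v x - u n x| ^ p x ∂μ ≤ C₁ * (modular μ p v + K) := fun n =>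
    (hC₁ v (u n) hv (hu n) hvint (hint n)).2.trans (by gcongr; exact hK n)
  have hdom : ∀ ε > 0, ∃ H, Integrable H μ ∧ ∀ n, ∀ᵐ x ∂μ,
      |(|u n x| ^ p x - |v x - u n x| ^ p x - |v x| ^ p x)| ≤
        ε * |v x - u n x| ^ p x + H x := by
    intro ε hε
    obtain ⟨C, hC⟩ := exists_abs_rpow_sub_rpow_sub_rpow_le P hε
    exact ⟨fun x => C * |v x| ^ p x, hvint.const_mul C, fun n =>
      hp0.mono fun x hpx => hC (p x) hpx (u n x) (v x)⟩
  have hFlim : ∀ᵐ x ∂μ, Tendsto (fun n => |u n x| ^ p x - |v x - u n x| ^ p x - |v x| ^ p x)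
      atTop (𝓝 0) := by
    filter_upwards [hlim, hp] with x hx hpx
    have hlim_u := hx.abs.rpow_const (p := p x) (Or.inr hpx.1.le)
    have hlim_sub :=
      ((tendsto_const_nhds (x := v x)).sub hx).abs.rpow_const (p := p x) (Or.inr hpx.1.le)
    simpa [Real.zero_rpow hpx.1.ne'] using
      (hlim_u.sub hlim_sub).sub (tendsto_const_nhds (x := |v x| ^ p x))
  have hsplit : ∀ n, ∫ x, (|u n x| ^ p x - |v x - u n x| ^ p x - |v x| ^ p x) ∂μ =
      modular μ p (u n) - modular μ p (v - u n) - modular μ p v := fun n => by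
    rw [integral_sub (f := fun x => |u n x| ^ p x - |v x - u n x| ^ p x)
      ((hint n).sub (hG n)) hvint, integral_sub (hint n) (hG n)]
    rfl
  simpa only [hsplit, tendsto_sub_nhds_zero_iff] using
    tendsto_integral_of_abs_le_mul_add
      (F := fun n x => |u n x| ^ p x - |v x - u n x| ^ p x - |v x| ^ p x)
      (fun n => ((hint n).sub (hG n)).sub hvint) hG
      (fun n => ae_of_all _ fun x => Real.rpow_nonneg (abs_nonneg _) _) hGL hdom hFlim

end

theorem brezis_lieb_variable_exponent_general (N : ℕ) (Ω : Set (EuclideanSpace ℝ (Fin N)))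
    (hΩo : IsOpen Ω)
    (h : EuclideanSpace ℝ (Fin N) → ℝ) (hhc : ContinuousOn h Ω)
    (hplus : ℝ) (hh1 : ∀ x ∈ Ω, 1 ≤ h x) (hh2 : ∀ x ∈ Ω, h x ≤ hplus)
    (u : ℕ → EuclideanSpace ℝ (Fin N) → ℝ) (hu : ∀ n, Measurable (u n))
    (hmod : ∀ n, Integrable (fun x => |u n x| ^ h x) (volume.restrict Ω))
    (M : ℝ) (hbdd : ∀ n, luxNorm (volume.restrict Ω) h (u n) ≤ M)
    (ulim : EuclideanSpace ℝ (Fin N) → ℝ)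
    (hae : ∀ᵐ x ∂(volume.restrict Ω), Tendsto (fun n => u n x) atTop (𝓝 (ulim x))) :
    Tendsto (fun n => (∫ x, |u n x| ^ h x ∂(volume.restrict Ω)) -
        ∫ x, |ulim x - u n x| ^ h x ∂(volume.restrict Ω)) atTop
      (𝓝 (∫ x, |ulim x| ^ h x ∂(volume.restrict Ω))) := by
  have hp : ∀ᵐ x ∂(volume.restrict Ω), h x ∈ Set.Icc 1 hplus :=
    (ae_restrict_mem hΩo.measurableSet).mono fun x hx => ⟨hh1 x hx, hh2 x hx⟩
  have hpm : AEMeasurable h (volume.restrict Ω) := hhc.aemeasurable hΩo.measurableSet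
  have hK : ∀ n, modular (volume.restrict Ω) h (u n) ≤ max 1 (M + 1) ^ hplus := fun n =>
    modular_le_of_luxNorm_lt hp hpm (hu n).aemeasurable (hmod n) (le_max_left _ _)
      ((hbdd n).trans_lt ((lt_add_one M).trans_le (le_max_right _ _)))
  exact tendsto_modular_sub_modular_sub (hp.mono fun x hx => ⟨one_pos.trans_le hx.1, hx.2⟩) hpm
    (fun n => (hu n).aemeasurable) hmod hK hae

/-- **Brezis–Lieb lemma in variable exponent Lebesgue spaces** (Fu):
if `(u_n)` is bounded in `L^{h(·)}(Ω)` and `u_n → u` a.e., then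
`∫ |u_n|^{h} − ∫ |u − u_n|^{h} → ∫ |u|^{h}`. -/
theorem brezis_lieb_variable_exponent (N : ℕ) (Ω : Set (EuclideanSpace ℝ (Fin N)))
    (hΩo : IsOpen Ω) (hΩb : Bornology.IsBounded Ω)
    (h : EuclideanSpace ℝ (Fin N) → ℝ) (hhc : ContinuousOn h Ω)
    (hplus : ℝ) (hh1 : ∀ x ∈ Ω, 1 ≤ h x) (hh2 : ∀ x ∈ Ω, h x ≤ hplus)
    (u : ℕ → EuclideanSpace ℝ (Fin N) → ℝ) (hu : ∀ n, Measurable (u n))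
    (hmod : ∀ n, Integrable (fun x => |u n x| ^ h x) (volume.restrict Ω))
    (M : ℝ) (hbdd : ∀ n, luxNorm (volume.restrict Ω) h (u n) ≤ M)
    (ulim : EuclideanSpace ℝ (Fin N) → ℝ) (hulim : Measurable ulim)
    (hae : ∀ᵐ x ∂(volume.restrict Ω), Tendsto (fun n => u n x) atTop (𝓝 (ulim x))) :
    Tendsto (fun n => (∫ x, |u n x| ^ h x ∂(volume.restrict Ω)) -
        ∫ x, |ulim x - u n x| ^ h x ∂(volume.restrict Ω)) atTop
      (𝓝 (∫ x, |ulim x| ^ h x ∂(volume.restrict Ω))) :=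
  brezis_lieb_variable_exponent_general N Ω hΩo h hhc hplus hh1 hh2 u hu hmod M hbdd ulim hae
end

section
/- Let Ω̄ be a compact set in ℝ^N, let ν and ν_n be finite nonnegative Borel measures on Ω̄ with ν_n ⇀* ν (i.e. ∫ φ dν_n → ∫ φ dν for every φ ∈ C(Ω̄)), and let q ∈ C(Ω̄) with q > 1. Then for every ψ ∈ C^∞(Ω̄), the Luxemburg norms converge: ‖ψ‖_{L^{q(·)}_{ν_n}(Ω)} → ‖ψ‖_{L^{q(·)}_ν(Ω)} as n → ∞. -/
open MeasureTheory Filter Topology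

/-- **Bonder–Silva, Lemma 3.1**: if `ν_n ⇀* ν` weakly-* in the space of finite
nonnegative Borel measures on a compact set `K = Ω̄ ⊂ ℝ^N`, and `q ∈ C(K)` with
`q > 1` on `K`, then `‖ψ‖_{L^{q(·)}_{ν_n}} → ‖ψ‖_{L^{q(·)}_ν}` for every
`ψ ∈ C^∞`. -/
theorem luxNorm_weakStar_convergence (N : ℕ) (K : Set (EuclideanSpace ℝ (Fin N)))
    (hK : IsCompact K)
    (ν : Measure (EuclideanSpace ℝ (Fin N))) (hν : IsFiniteMeasure ν)
    (νn : ℕ → Measure (EuclideanSpace ℝ (Fin N)))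
    (hνn : ∀ n, IsFiniteMeasure (νn n))
    (hsupp : ν Kᶜ = 0) (hsuppn : ∀ n, νn n Kᶜ = 0)
    (hconv : ∀ φ : EuclideanSpace ℝ (Fin N) → ℝ, Continuous φ →
      Tendsto (fun n => ∫ x, φ x ∂(νn n)) atTop (𝓝 (∫ x, φ x ∂ν)))
    (q : EuclideanSpace ℝ (Fin N) → ℝ) (hq : Continuous q)
    (hq1 : ∀ x ∈ K, 1 < q x)
    (ψ : EuclideanSpace ℝ (Fin N) → ℝ) (hψ : ContDiff ℝ (⊤ : ℕ∞) ψ) :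
    Tendsto (fun n => luxNorm (νn n) q ψ) atTop (𝓝 (luxNorm ν q ψ)) := by
  classical
  haveI := hν
  have hψc : Continuous ψ := hψ.continuous
  -- the modified exponent, equal to `q` on `K`, everywhere `≥ 1`
  set q' : EuclideanSpace ℝ (Fin N) → ℝ := fun x => max (q x) 1 with hq'def
  have hq'c : Continuous q' := hq.max continuous_const
  have hq'1 : ∀ x, 1 ≤ q' x := fun x => le_max_right _ _
  have hq'pos : ∀ x, 0 < q' x := fun x => lt_of_lt_of_le one_pos (hq'1 x)
  have hq'K : ∀ x ∈ K, q' x = q x := fun x hx => max_eq_left (hq1 x hx).le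
  -- the integrand
  set g : ℝ → EuclideanSpace ℝ (Fin N) → ℝ := fun τ x => (|ψ x| / τ) ^ q' x with hgdef
  have hgc : ∀ τ, Continuous (g τ) := fun τ =>
    Continuous.rpow (hψc.abs.div_const τ) hq'c (fun x => Or.inr (hq'pos x))
  have hgnn : ∀ τ, 0 < τ → ∀ x, 0 ≤ g τ x := fun τ hτ x =>
    Real.rpow_nonneg (div_nonneg (abs_nonneg _) hτ.le) _
  -- a.e. membership in K
  have aeK : ∀ μ : Measure (EuclideanSpace ℝ (Fin N)), μ Kᶜ = 0 → ∀ᵐ x ∂μ, x ∈ K := by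
    intro μ h
    rw [ae_iff]
    exact h
  -- pointwise key inequality
  have hpt : ∀ τ' τ'' : ℝ, 0 < τ' → τ' ≤ τ'' → ∀ x, g τ'' x ≤ (τ' / τ'') * g τ' x := by
    intro τ' τ'' hτ' hle x
    have hτ'' : (0:ℝ) < τ'' := lt_of_lt_of_le hτ' hle
    have hc0 : (0:ℝ) < τ' / τ'' := div_pos hτ' hτ''
    have hc1 : τ' / τ'' ≤ 1 := (div_le_one hτ'').2 hle
    have hb0 : (0:ℝ) ≤ |ψ x| / τ' := div_nonneg (abs_nonneg _) hτ'.le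
    have hbase : |ψ x| / τ'' = (τ' / τ'') * (|ψ x| / τ') := by
      field_simp
    have h1 : g τ'' x = (τ' / τ'') ^ q' x * (|ψ x| / τ') ^ q' x := by
      rw [hgdef]
      simp only
      rw [hbase, Real.mul_rpow hc0.le hb0]
    have h2 : (τ' / τ'') ^ q' x ≤ τ' / τ'' := by
      calc (τ' / τ'') ^ q' x ≤ (τ' / τ'') ^ (1:ℝ) :=
            Real.rpow_le_rpow_of_exponent_ge hc0 hc1 (hq'1 x)
        _ = τ' / τ'' := Real.rpow_one _
    rw [h1]
    exact mul_le_mul_of_nonneg_right h2 (Real.rpow_nonneg hb0 _)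
  -- integrability
  have hint : ∀ μ : Measure (EuclideanSpace ℝ (Fin N)), IsFiniteMeasure μ → μ Kᶜ = 0 →
      ∀ τ, Integrable (g τ) μ := by
    intro μ hμ hμsupp τ
    haveI := hμ
    obtain ⟨C, hC⟩ := hK.exists_bound_of_continuousOn (hgc τ).continuousOn
    exact (integrable_const C).mono' (hgc τ).aestronglyMeasurable
      (by filter_upwards [aeK μ hμsupp] with x hx using hC x hx)
  -- the "modular"
  have hFnn : ∀ μ : Measure (EuclideanSpace ℝ (Fin N)), ∀ τ, 0 < τ →
      (0:ℝ) ≤ ∫ x, g τ x ∂μ := fun μ τ hτ => integral_nonneg (hgnn τ hτ)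
  -- rewriting the luxNorm through g
  have hlux : ∀ μ : Measure (EuclideanSpace ℝ (Fin N)), μ Kᶜ = 0 →
      luxNorm μ q ψ = sInf {τ : ℝ | 0 < τ ∧ ∫ x, g τ x ∂μ ≤ 1} := by
    intro μ hμsupp
    unfold luxNorm
    congr 1
    ext τ
    have : ∫ x, (|ψ x| / τ) ^ q x ∂μ = ∫ x, g τ x ∂μ := by
      apply integral_congr_ae
      filter_upwards [aeK μ hμsupp] with x hx
      rw [hgdef]
      simp only
      rw [hq'K x hx]
    simp [this]
  -- nonemptiness of the admissible set
  have hne : ∀ μ : Measure (EuclideanSpace ℝ (Fin N)), IsFiniteMeasure μ → μ Kᶜ = 0 →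
      ∃ τ : ℝ, 0 < τ ∧ ∫ x, g τ x ∂μ ≤ 1 := by
    intro μ hμ hμsupp
    haveI := hμ
    obtain ⟨M, hM⟩ := hK.exists_bound_of_continuousOn hψc.continuousOn
    set M₀ : ℝ := max M 0 with hM₀def
    have hM₀ : ∀ x ∈ K, |ψ x| ≤ M₀ := fun x hx => le_trans (hM x hx) (le_max_left _ _)
    have hM₀nn : (0:ℝ) ≤ M₀ := le_max_right _ _
    set m : ℝ := (μ Set.univ).toReal with hmdef
    have hmnn : (0:ℝ) ≤ m := ENNReal.toReal_nonneg
    set C : ℝ := (M₀ + 1) * (1 + m) with hCdef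
    have hC1 : (1:ℝ) ≤ C := by nlinarith
    have hCpos : (0:ℝ) < C := lt_of_lt_of_le one_pos hC1
    refine ⟨C, hCpos, ?_⟩
    have hbound : ∀ᵐ x ∂μ, g C x ≤ M₀ / C := by
      filter_upwards [aeK μ hμsupp] with x hx
      have hb0 : (0:ℝ) ≤ |ψ x| / C := div_nonneg (abs_nonneg _) hCpos.le
      have hb1 : |ψ x| / C ≤ 1 := by
        rw [div_le_one hCpos]
        calc |ψ x| ≤ M₀ := hM₀ x hx
          _ ≤ C := by nlinarith
      have hble : |ψ x| / C ≤ M₀ / C := by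
        gcongr
        exact hM₀ x hx
      rcases eq_or_lt_of_le hb0 with h0 | h0
      · rw [hgdef]
        simp only
        rw [← h0, Real.zero_rpow (ne_of_gt (hq'pos x))]
        exact div_nonneg hM₀nn hCpos.le
      · calc g C x ≤ (|ψ x| / C) ^ (1:ℝ) :=
              Real.rpow_le_rpow_of_exponent_ge h0 hb1 (hq'1 x)
          _ = |ψ x| / C := Real.rpow_one _
          _ ≤ M₀ / C := hble
    calc ∫ x, g C x ∂μ ≤ ∫ _, M₀ / C ∂μ :=
          integral_mono_of_nonneg (Filter.Eventually.of_forall (hgnn C hCpos))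
            (integrable_const _) hbound
      _ = m * (M₀ / C) := by rw [integral_const]; simp [hmdef, smul_eq_mul, Measure.real]
      _ ≤ 1 := by
          rw [mul_div_assoc', div_le_one hCpos, hCdef]
          nlinarith
  -- monotonicity of the modular
  have hFmono : ∀ μ : Measure (EuclideanSpace ℝ (Fin N)), IsFiniteMeasure μ → μ Kᶜ = 0 →
      ∀ σ τ : ℝ, 0 < σ → σ ≤ τ → ∫ x, g τ x ∂μ ≤ ∫ x, g σ x ∂μ := by
    intro μ hμ hμsupp σ τ hσ hle
    haveI := hμ
    have hτ : (0:ℝ) < τ := lt_of_lt_of_le hσ hle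
    refine integral_mono_of_nonneg (Filter.Eventually.of_forall (hgnn τ hτ))
      (hint μ hμ hμsupp σ) (Filter.Eventually.of_forall fun x => ?_)
    calc g τ x ≤ (σ / τ) * g σ x := hpt σ τ hσ hle x
      _ ≤ 1 * g σ x := mul_le_mul_of_nonneg_right ((div_le_one hτ).2 hle) (hgnn σ hσ x)
      _ = g σ x := one_mul _
  -- strict decrease of the modular for ν
  have hstrict : ∀ τ' τ'' : ℝ, 0 < τ' → τ' < τ'' → (∫ x, g τ' x ∂ν ≤ 1) →
      ∫ x, g τ'' x ∂ν ≤ τ' / τ'' := by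
    intro τ' τ'' hτ' hlt hle1
    have hτ'' : (0:ℝ) < τ'' := lt_trans hτ' hlt
    have hc0 : (0:ℝ) < τ' / τ'' := div_pos hτ' hτ''
    calc ∫ x, g τ'' x ∂ν ≤ ∫ x, (τ' / τ'') * g τ' x ∂ν :=
          integral_mono_of_nonneg (Filter.Eventually.of_forall (hgnn τ'' hτ''))
            ((hint ν hν hsupp τ').const_mul _)
            (Filter.Eventually.of_forall (hpt τ' τ'' hτ' hlt.le))
      _ = (τ' / τ'') * ∫ x, g τ' x ∂ν := integral_const_mul _ _
      _ ≤ (τ' / τ'') * 1 := mul_le_mul_of_nonneg_left hle1 hc0.le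
      _ = τ' / τ'' := mul_one _
  -- weak-* convergence of the modular at each fixed τ
  have hFconv : ∀ τ : ℝ, Tendsto (fun n => ∫ x, g τ x ∂(νn n)) atTop
      (𝓝 (∫ x, g τ x ∂ν)) := fun τ => hconv (g τ) (hgc τ)
  -- abbreviations
  set S : Measure (EuclideanSpace ℝ (Fin N)) → Set ℝ :=
    fun μ => {τ : ℝ | 0 < τ ∧ ∫ x, g τ x ∂μ ≤ 1} with hSdef
  have hbdd : ∀ μ, BddBelow (S μ) := fun μ => ⟨0, fun τ hτ => hτ.1.le⟩
  have hSnn : ∀ μ : Measure (EuclideanSpace ℝ (Fin N)), (0:ℝ) ≤ sInf (S μ) :=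
    fun μ => Real.sInf_nonneg fun τ hτ => hτ.1.le
  have hrw : (fun n => luxNorm (νn n) q ψ) = fun n => sInf (S (νn n)) :=
    funext fun n => hlux (νn n) (hsuppn n)
  rw [hrw, hlux ν hsupp]
  set L : ℝ := sInf (S ν) with hLdef
  have hSνne : (S ν).Nonempty := by
    obtain ⟨τ, hτ⟩ := hne ν hν hsupp
    exact ⟨τ, hτ⟩
  rw [tendsto_order]
  constructor
  · -- lower bound
    intro a ha
    rcases lt_or_ge a 0 with ha0 | ha0
    · exact Filter.Eventually.of_forall fun n => lt_of_lt_of_le ha0 (hSnn (νn n))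
    · set τ : ℝ := (a + L) / 2 with hτdef
      have haτ : a < τ := by rw [hτdef]; linarith
      have hτL : τ < L := by rw [hτdef]; linarith
      have hτpos : (0:ℝ) < τ := lt_of_le_of_lt ha0 haτ
      have hτnot : ¬ (∫ x, g τ x ∂ν ≤ 1) := by
        intro hcon
        exact absurd (csInf_le (hbdd ν) (⟨hτpos, hcon⟩ : τ ∈ S ν)) (not_le.2 hτL)
      have h1lt : (1:ℝ) < ∫ x, g τ x ∂ν := lt_of_not_ge hτnot
      filter_upwards [(hFconv τ).eventually (eventually_gt_nhds h1lt)] with n hn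
      have hτle : τ ≤ sInf (S (νn n)) := by
        refine le_csInf ?_ fun σ hσ => ?_
        · obtain ⟨τ₀, hτ₀⟩ := hne (νn n) (hνn n) (hsuppn n)
          exact ⟨τ₀, hτ₀⟩
        · by_contra hστ
          push_neg at hστ
          have : ∫ x, g τ x ∂(νn n) ≤ ∫ x, g σ x ∂(νn n) :=
            hFmono (νn n) (hνn n) (hsuppn n) σ τ hσ.1 hστ.le
          linarith [hσ.2]
      exact lt_of_lt_of_le haτ hτle
  · -- upper bound
    intro a ha
    obtain ⟨τ', hτ'S, hτ'lt⟩ := exists_lt_of_csInf_lt hSνne ha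
    set τ'' : ℝ := (τ' + a) / 2 with hτ''def
    have hττ : τ' < τ'' := by rw [hτ''def]; linarith
    have hτ''a : τ'' < a := by rw [hτ''def]; linarith
    have hmod : ∫ x, g τ'' x ∂ν ≤ τ' / τ'' := hstrict τ' τ'' hτ'S.1 hττ hτ'S.2
    have hτ''pos : (0:ℝ) < τ'' := lt_trans hτ'S.1 hττ
    have hlt1 : ∫ x, g τ'' x ∂ν < 1 :=
      lt_of_le_of_lt hmod ((div_lt_one hτ''pos).2 hττ)
    filter_upwards [(hFconv τ'').eventually (eventually_lt_nhds hlt1)] with n hn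
    exact lt_of_le_of_lt (csInf_le (hbdd (νn n)) (⟨hτ''pos, hn.le⟩ : τ'' ∈ S (νn n))) hτ''a
end

section
/- Let μ, ν be finite nonnegative Borel measures on the closure Ω̄ of a bounded domain, and suppose there exists c > 0 and exponents p, h ∈ C(Ω̄) with p, h > 1 and inf_{x∈Ω}(h(x) − p(x)) > 0 such that ‖ψ‖_{L^{h(·)}_ν(Ω)} ≤ c ‖ψ‖_{L^{p(·)}_μ(Ω)} for all ψ ∈ C^∞(Ω̄). Then ν is purely atomic: there exists an at most countable set of distinct points {x_j}_{j∈J} ⊂ Ω̄ and positive reals {ν_j}_{j∈J} such that ν = Σ_{j∈J} ν_j δ_{x_j}. -/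
open MeasureTheory Filter Topology

open Metric Set
open scoped ENNReal NNReal

lemma lux_le {α : Type*} [MeasurableSpace α] (μ : Measure α) (p : α → ℝ) (u : α → ℝ)
    {τ : ℝ} (hτ : 0 < τ) (hint : ∫ x, (|u x| / τ) ^ p x ∂μ ≤ 1) : luxNorm μ p u ≤ τ :=
  csInf_le ⟨0, fun _ ht => ht.1.le⟩ ⟨hτ, hint⟩

lemma le_lux {α : Type*} [MeasurableSpace α] (μ : Measure α) (p : α → ℝ) (u : α → ℝ)
    {t : ℝ} (hne : {τ : ℝ | 0 < τ ∧ ∫ x, (|u x| / τ) ^ p x ∂μ ≤ 1}.Nonempty)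
    (hb : ∀ τ, 0 < τ → ∫ x, (|u x| / τ) ^ p x ∂μ ≤ 1 → t ≤ τ) : t ≤ luxNorm μ p u :=
  le_csInf hne fun τ hτ => hb τ hτ.1 hτ.2

noncomputable def sig (u : ℝ) : ℝ := (1 + Real.exp (-u))⁻¹

lemma sig_denom_pos (u : ℝ) : 0 < 1 + Real.exp (-u) := by positivity

lemma sig_contDiff : ContDiff ℝ (⊤ : ℕ∞) sig :=
  (contDiff_const.add (Real.contDiff_exp.comp contDiff_neg)).inv
    (fun u => (sig_denom_pos u).ne')

lemma sig_pos (u : ℝ) : 0 < sig u := inv_pos.2 (sig_denom_pos u)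

lemma sig_le_one (u : ℝ) : sig u ≤ 1 := by
  rw [sig, inv_le_one_iff₀]; right; nlinarith [Real.exp_pos (-u)]

lemma half_le_sig {u : ℝ} (hu : 0 ≤ u) : 2⁻¹ ≤ sig u := by
  have h1 : Real.exp (-u) ≤ 1 := Real.exp_le_one_iff.2 (by linarith)
  rw [sig, le_inv_comm₀ (by norm_num) (sig_denom_pos u)]
  rw [inv_inv]; linarith

lemma sig_le_exp (u : ℝ) : sig u ≤ Real.exp u := by
  have h := Real.exp_pos (-u)
  have h2 : (Real.exp u)⁻¹ = Real.exp (-u) := by rw [Real.exp_neg]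
  rw [sig, inv_le_comm₀ (sig_denom_pos u) (Real.exp_pos u), h2]
  linarith

lemma ae_mem_of_compl_null {α : Type*} [MeasurableSpace α] {ξ : Measure α} {K : Set α}
    (hξ : ξ Kᶜ = 0) : ∀ᵐ y ∂ξ, y ∈ K := by
  rw [ae_iff, ← Set.compl_def]; exact hξ

lemma aux_integrable {α : Type*} [MeasurableSpace α] {ξ : Measure α} [IsFiniteMeasure ξ]
    {K : Set α} (hξK : ξ Kᶜ = 0) {q : α → ℝ} (hq : Measurable q) {M' : ℝ}
    (hq1 : ∀ y ∈ K, 1 ≤ q y) (hqM : ∀ y ∈ K, q y ≤ M') {u : α → ℝ} (hu : Measurable u)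
    (hu1 : ∀ y, |u y| ≤ 1) {τ : ℝ} (hτ : 0 < τ) :
    Integrable (fun y => (|u y| / τ) ^ q y) ξ := by
  have hmeas : Measurable fun y => (|u y| / τ) ^ q y := (hu.abs.div_const τ).pow hq
  refine ⟨hmeas.aestronglyMeasurable,
    HasFiniteIntegral.of_bounded (C := (max 1 τ⁻¹) ^ M') ?_⟩
  filter_upwards [ae_mem_of_compl_null hξK] with y hy
  rw [Real.norm_eq_abs, abs_of_nonneg (Real.rpow_nonneg (by positivity) _)]
  have h1 : |u y| / τ ≤ max 1 τ⁻¹ := by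
    refine le_trans ?_ (le_max_right _ _)
    rw [div_le_iff₀ hτ, inv_mul_cancel₀ hτ.ne']; exact hu1 y
  calc (|u y| / τ) ^ q y ≤ (max 1 τ⁻¹) ^ q y :=
        Real.rpow_le_rpow (by positivity) h1 (le_trans zero_le_one (hq1 y hy))
    _ ≤ (max 1 τ⁻¹) ^ M' :=
        Real.rpow_le_rpow_of_exponent_le (le_max_left _ _) (hqM y hy)

set_option maxHeartbeats 1000000 in
lemma key_estimate {N : ℕ}
    (μ ν : Measure (EuclideanSpace ℝ (Fin N))) [IsFiniteMeasure μ] [IsFiniteMeasure ν]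
    (K : Set (EuclideanSpace ℝ (Fin N))) (hKm : MeasurableSet K)
    (hμsupp : μ Kᶜ = 0) (hνsupp : ν Kᶜ = 0)
    (p h : EuclideanSpace ℝ (Fin N) → ℝ)
    (hpc : Continuous p) (hhc : Continuous h)
    (hp1 : ∀ y ∈ K, 1 ≤ p y) (hh1 : ∀ y ∈ K, 1 ≤ h y)
    (M' : ℝ) (hpM' : ∀ y ∈ K, p y ≤ M') (hhM' : ∀ y ∈ K, h y ≤ M')
    (c : ℝ) (hc : 0 < c)
    (hrh : ∀ ψ : EuclideanSpace ℝ (Fin N) → ℝ, ContDiff ℝ (⊤ : ℕ∞) ψ →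
      luxNorm ν h ψ ≤ c * luxNorm μ p ψ)
    (x : EuclideanSpace ℝ (Fin N)) (hx : x ∈ K)
    (pP hM : ℝ) (hpP1 : 1 ≤ pP) (hpPM : pP ≤ M') (hhM1 : 1 ≤ hM) (hhMM : hM ≤ M')
    (r : ℝ) (hr : 0 < r)
    (hball : ∀ y ∈ K, dist y x < 2 * r → p y ≤ pP ∧ hM ≤ h y)
    (ε₁ : ℝ) (hε₁ : 0 < ε₁) (hε₁4 : ε₁ ≤ 4⁻¹)
    (hε₁small : 2 * c * (2 * ε₁) ^ (M'⁻¹) ≤ 2⁻¹)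
    (hb : (μ (closedBall x r)).toReal ≤ ε₁) :
    (ν (closedBall x r)).toReal ≤
      ((max 1 (2*c)) ^ M' * 2 ^ M') * (μ (closedBall x r)).toReal ^ (hM / pP) := by
  have hM'1 : 1 ≤ M' := le_trans hpP1 hpPM
  set b := (μ (closedBall x r)).toReal with hbdef
  set a := (ν (closedBall x r)).toReal with hadef
  have ha0 : 0 ≤ a := ENNReal.toReal_nonneg
  have hb0 : 0 ≤ b := ENNReal.toReal_nonneg
  have hhM0 : (0:ℝ) < hM := lt_of_lt_of_le one_pos hhM1
  have hpP0 : (0:ℝ) < pP := lt_of_lt_of_le one_pos hpP1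
  -- the analytic test functions
  set Ψ : ℝ → ℝ → EuclideanSpace ℝ (Fin N) → ℝ :=
    fun lam s y => sig (lam * ((r^2+s^2)/2 - ‖y - x‖^2)) with hΨdef
  have hΨcd : ∀ lam s, ContDiff ℝ (⊤ : ℕ∞) (Ψ lam s) := fun lam s =>
    sig_contDiff.comp (contDiff_const.mul (contDiff_const.sub
      ((contDiff_id.sub contDiff_const).norm_sq ℝ)))
  have hΨpos : ∀ lam s y, 0 < Ψ lam s y := fun _ _ _ => sig_pos _
  have hΨle1 : ∀ lam s y, Ψ lam s y ≤ 1 := fun _ _ _ => sig_le_one _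
  have hΨabs : ∀ lam s y, |Ψ lam s y| = Ψ lam s y := fun lam s y => abs_of_pos (hΨpos lam s y)
  have hΨhalf : ∀ lam s y, 0 ≤ lam → r ≤ s → y ∈ closedBall x r → 2⁻¹ ≤ Ψ lam s y := by
    intro lam s y hlam hrs hy
    apply half_le_sig
    have hd : ‖y - x‖ ≤ r := by rwa [← dist_eq_norm, ← mem_closedBall]
    have hd0 : 0 ≤ ‖y - x‖ := norm_nonneg _
    have h1 : ‖y - x‖^2 ≤ r^2 := by
      apply pow_le_pow_left₀ hd0 hd
    have h2 : r^2 ≤ s^2 := by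
      apply pow_le_pow_left₀ hr.le hrs
    exact mul_nonneg hlam (by linarith)
  have hΨtail : ∀ lam s y, 0 ≤ lam → 0 ≤ s → y ∉ ball x s →
      Ψ lam s y ≤ Real.exp (-(lam * ((s^2 - r^2)/2))) := by
    intro lam s y hlam hs hy
    refine le_trans (sig_le_exp _) (Real.exp_le_exp.2 ?_)
    have hd : s ≤ ‖y - x‖ := by
      rw [← dist_eq_norm]; simpa [mem_ball, not_lt] using hy
    have h1 : s^2 ≤ ‖y - x‖^2 := by
      apply pow_le_pow_left₀ hs hd
    have h2 : (r^2+s^2)/2 - ‖y - x‖^2 ≤ -((s^2 - r^2)/2) := by linarith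
    calc lam * ((r^2+s^2)/2 - ‖y - x‖^2) ≤ lam * (-((s^2 - r^2)/2)) :=
          mul_le_mul_of_nonneg_left h2 hlam
      _ = -(lam * ((s^2 - r^2)/2)) := by ring
  have aeKν : ∀ᵐ y ∂ν, y ∈ K := ae_mem_of_compl_null hνsupp
  have aeKμ : ∀ᵐ y ∂μ, y ∈ K := ae_mem_of_compl_null hμsupp
  -- Claim A : lower bound for the ν-Luxemburg norm
  have claimA : ∀ lam s : ℝ, 0 ≤ lam → r ≤ s →
      2⁻¹ * min 1 (a ^ hM⁻¹) ≤ luxNorm ν h (Ψ lam s) := by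
    intro lam s hlam hrs
    have hψm : Measurable (Ψ lam s) := (hΨcd lam s).continuous.measurable
    have hint : ∀ τ : ℝ, 0 < τ → Integrable (fun y => (|Ψ lam s y| / τ) ^ h y) ν :=
      fun τ hτ => aux_integrable hνsupp hhc.measurable hh1 hhM' hψm
        (fun y => by rw [hΨabs]; exact hΨle1 lam s y) hτ
    have hne : {τ : ℝ | 0 < τ ∧ ∫ y, (|Ψ lam s y| / τ) ^ h y ∂ν ≤ 1}.Nonempty := by
      set τ₁ := max 1 (ν univ).toReal with hτ₁def
      have hτ₁1 : (1:ℝ) ≤ τ₁ := le_max_left _ _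
      have hτ₁0 : (0:ℝ) < τ₁ := lt_of_lt_of_le one_pos hτ₁1
      refine ⟨τ₁, hτ₁0, ?_⟩
      have hle : (fun y => (|Ψ lam s y| / τ₁) ^ h y) ≤ᵐ[ν] fun _ => τ₁⁻¹ := by
        filter_upwards [aeKν] with y hy
        have hbase0 : 0 ≤ |Ψ lam s y| / τ₁ := by positivity
        have hbase : |Ψ lam s y| / τ₁ ≤ τ₁⁻¹ := by
          rw [hΨabs, div_le_iff₀ hτ₁0, inv_mul_cancel₀ hτ₁0.ne']
          exact hΨle1 lam s y
        have hbase1 : |Ψ lam s y| / τ₁ ≤ 1 :=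
          le_trans hbase (inv_le_one_of_one_le₀ hτ₁1)
        calc (|Ψ lam s y| / τ₁) ^ h y ≤ (|Ψ lam s y| / τ₁) ^ (1:ℝ) :=
              Real.rpow_le_rpow_of_exponent_ge' hbase0 hbase1 zero_le_one (hh1 y hy)
          _ = |Ψ lam s y| / τ₁ := Real.rpow_one _
          _ ≤ τ₁⁻¹ := hbase
      calc ∫ y, (|Ψ lam s y| / τ₁) ^ h y ∂ν ≤ ∫ _, τ₁⁻¹ ∂ν :=
            integral_mono_ae (hint τ₁ hτ₁0) (integrable_const _) hle
        _ = (ν univ).toReal * τ₁⁻¹ := by rw [integral_const, smul_eq_mul]; rfl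
        _ ≤ τ₁ * τ₁⁻¹ := by
            apply mul_le_mul_of_nonneg_right (le_max_right _ _) (by positivity)
        _ = 1 := mul_inv_cancel₀ hτ₁0.ne'
    refine le_lux _ _ _ hne ?_
    intro τ hτ hτint
    rcases le_or_gt τ 2⁻¹ with hτ2 | hτ2
    · -- small τ : extract information
      have h2τ0 : (0:ℝ) < 2*τ := by linarith
      have h2τinv : (1:ℝ) ≤ (2*τ)⁻¹ := by
        rw [le_inv_comm₀ one_pos h2τ0]; linarith
      set s0 := closedBall x r ∩ K with hs0def
      have hs0m : MeasurableSet s0 := measurableSet_closedBall.inter hKm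
      have hνs0 : ν s0 = ν (closedBall x r) := by
        refine le_antisymm (measure_mono inter_subset_left) ?_
        calc ν (closedBall x r) ≤ ν (s0 ∪ Kᶜ) := measure_mono (fun y hy => by
              by_cases hyK : y ∈ K
              · exact Or.inl ⟨hy, hyK⟩
              · exact Or.inr hyK)
          _ ≤ ν s0 + ν Kᶜ := measure_union_le _ _
          _ = ν s0 := by rw [hνsupp, add_zero]
      have hconst : ∀ y ∈ s0, ((2*τ)⁻¹) ^ hM ≤ (|Ψ lam s y| / τ) ^ h y := by
        intro y hy
        obtain ⟨hycb, hyK⟩ := hy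
        have hhy : hM ≤ h y := (hball y hyK (lt_of_le_of_lt (mem_closedBall.1 hycb)
          (by linarith))).2
        have hbase : (2*τ)⁻¹ ≤ |Ψ lam s y| / τ := by
          rw [hΨabs, mul_inv, div_eq_mul_inv]
          exact mul_le_mul_of_nonneg_right (hΨhalf lam s y hlam hrs hycb) (by positivity)
        calc ((2*τ)⁻¹) ^ hM ≤ ((2*τ)⁻¹) ^ h y :=
              Real.rpow_le_rpow_of_exponent_le h2τinv hhy
          _ ≤ (|Ψ lam s y| / τ) ^ h y :=
              Real.rpow_le_rpow (by positivity) hbase (by linarith [hh1 y hyK])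
      have key1 : ((2*τ)⁻¹) ^ hM * (ν s0).toReal ≤ ∫ y in s0, (|Ψ lam s y| / τ) ^ h y ∂ν :=
        by have := setIntegral_ge_of_const_le hs0m (measure_ne_top ν s0) hconst
             ((hint τ hτ).integrableOn)
           rwa [smul_eq_mul, mul_comm] at this
      have key2 : ∫ y in s0, (|Ψ lam s y| / τ) ^ h y ∂ν ≤ ∫ y, (|Ψ lam s y| / τ) ^ h y ∂ν :=
        setIntegral_le_integral (hint τ hτ) (Eventually.of_forall fun y => by positivity)
      have hfin : ((2*τ)⁻¹) ^ hM * a ≤ 1 := by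
        rw [hadef, ← hνs0]
        exact le_trans key1 (le_trans key2 hτint)
      have hX : (0:ℝ) < (2*τ) ^ hM := Real.rpow_pos_of_pos h2τ0 _
      have ha2τ : a ≤ (2*τ) ^ hM := by
        rw [Real.inv_rpow h2τ0.le] at hfin
        have h6 := (inv_mul_le_iff₀ hX).1 hfin
        rwa [mul_one] at h6
      have : a ^ hM⁻¹ ≤ 2*τ := by
        have h2 := Real.rpow_le_rpow ha0 ha2τ (inv_nonneg.2 hhM0.le)
        rwa [← Real.rpow_mul h2τ0.le, mul_inv_cancel₀ hhM0.ne', Real.rpow_one] at h2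
      calc 2⁻¹ * min 1 (a ^ hM⁻¹) ≤ 2⁻¹ * (a ^ hM⁻¹) := by
            apply mul_le_mul_of_nonneg_left (min_le_right _ _) (by norm_num)
        _ ≤ 2⁻¹ * (2*τ) := by
            apply mul_le_mul_of_nonneg_left this (by norm_num)
        _ = τ := by ring
    · have hm1 : min 1 (a ^ hM⁻¹) ≤ 1 := min_le_left _ _
      linarith
  -- Claim B : upper bound for the μ-Luxemburg norm
  have claimB : ∀ s τ₀ : ℝ, r < s → s ≤ 2*r → 0 < τ₀ → τ₀ ≤ 1 →
      (τ₀⁻¹) ^ pP * (μ (ball x s)).toReal ≤ 2⁻¹ →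
      ∃ lam, 0 ≤ lam ∧ luxNorm μ p (Ψ lam s) ≤ τ₀ := by
    intro s τ₀ hrs hs2r hτ₀0 hτ₀1 hcond
    set Δ := (s^2 - r^2)/2 with hΔdef
    have hΔ : 0 < Δ := by
      rw [hΔdef]
      have : r^2 < s^2 := by
        apply pow_lt_pow_left₀ hrs hr.le
        norm_num
      linarith
    set mtot := (μ univ).toReal with hmtotdef
    have hmtot0 : 0 ≤ mtot := ENNReal.toReal_nonneg
    set t' := τ₀ * (2*mtot+2)⁻¹ with ht'def
    have ht'0 : 0 < t' := by positivity
    have hz1 : (2*mtot+2)⁻¹ ≤ 1 := by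
      rw [inv_le_one_iff₀]; right; linarith
    have ht'τ : t' ≤ τ₀ := by
      calc t' ≤ τ₀ * 1 := mul_le_mul_of_nonneg_left hz1 hτ₀0.le
        _ = τ₀ := mul_one _
    set lam := max 0 (-(Real.log t') / Δ) with hlamdef
    have hlam0 : 0 ≤ lam := le_max_left _ _
    have hexp : Real.exp (-(lam * Δ)) ≤ t' := by
      have h1 : -(Real.log t') / Δ ≤ lam := le_max_right _ _
      have h2 : -(Real.log t') ≤ lam * Δ := by
        rw [div_le_iff₀ hΔ] at h1; linarith
      calc Real.exp (-(lam * Δ)) ≤ Real.exp (Real.log t') := Real.exp_le_exp.2 (by linarith)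
        _ = t' := Real.exp_log ht'0
    refine ⟨lam, hlam0, lux_le _ _ _ hτ₀0 ?_⟩
    have hψm : Measurable (Ψ lam s) := (hΨcd lam s).continuous.measurable
    have hgint : Integrable (fun y => (|Ψ lam s y| / τ₀) ^ p y) μ :=
      aux_integrable hμsupp hpc.measurable hp1 hpM' hψm
        (fun y => by rw [hΨabs]; exact hΨle1 lam s y) hτ₀0
    set F : EuclideanSpace ℝ (Fin N) → ℝ :=
      fun y => (ball x s ∩ K).indicator (fun _ => (τ₀⁻¹) ^ pP) y + t'/τ₀ with hFdef
    have hFint : Integrable F μ :=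
      ((integrable_const _).indicator (measurableSet_ball.inter hKm)).add (integrable_const _)
    have hgF : (fun y => (|Ψ lam s y| / τ₀) ^ p y) ≤ᵐ[μ] F := by
      filter_upwards [aeKμ] with y hy
      by_cases hyb : y ∈ ball x s
      · have hFy : F y = (τ₀⁻¹) ^ pP + t'/τ₀ := by
          rw [hFdef]; simp [Set.indicator_of_mem (Set.mem_inter hyb hy)]
        have hbase : |Ψ lam s y| / τ₀ ≤ τ₀⁻¹ := by
          rw [hΨabs, div_le_iff₀ hτ₀0, inv_mul_cancel₀ hτ₀0.ne']
          exact hΨle1 lam s y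
        have hτ₀inv : (1:ℝ) ≤ τ₀⁻¹ := by
          rw [le_inv_comm₀ one_pos hτ₀0]; linarith
        have hpy : p y ≤ pP := (hball y hy (lt_of_lt_of_le (mem_ball.1 hyb) hs2r)).1
        have hgle : (|Ψ lam s y| / τ₀) ^ p y ≤ (τ₀⁻¹) ^ pP :=
          calc (|Ψ lam s y| / τ₀) ^ p y ≤ (τ₀⁻¹) ^ p y :=
                Real.rpow_le_rpow (by positivity) hbase
                  (le_trans zero_le_one (hp1 y hy))
            _ ≤ (τ₀⁻¹) ^ pP := Real.rpow_le_rpow_of_exponent_le hτ₀inv hpy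
        rw [hFy]
        have := div_nonneg ht'0.le hτ₀0.le
        linarith
      · have hFy : F y = t'/τ₀ := by
          rw [hFdef]
          simp [Set.indicator_of_notMem (fun hmem => hyb (Set.mem_of_mem_inter_left hmem))]
        rw [hFy]
        have hψt : Ψ lam s y ≤ t' :=
          le_trans (hΨtail lam s y hlam0 (by linarith) hyb) hexp
        have hbase : |Ψ lam s y| / τ₀ ≤ t'/τ₀ := by
          rw [hΨabs]; gcongr
        have hbase1 : |Ψ lam s y| / τ₀ ≤ 1 :=
          le_trans hbase (by rw [div_le_one hτ₀0]; exact ht'τ)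
        calc (|Ψ lam s y| / τ₀) ^ p y ≤ (|Ψ lam s y| / τ₀) ^ (1:ℝ) :=
              Real.rpow_le_rpow_of_exponent_ge' (by positivity) hbase1 zero_le_one (hp1 y hy)
          _ = |Ψ lam s y| / τ₀ := Real.rpow_one _
          _ ≤ t'/τ₀ := hbase
    calc ∫ y, (|Ψ lam s y| / τ₀) ^ p y ∂μ ≤ ∫ y, F y ∂μ := integral_mono_ae hgint hFint hgF
      _ = (μ (ball x s ∩ K)).toReal * (τ₀⁻¹) ^ pP + mtot * (t'/τ₀) := by
          rw [hFdef, integral_add ((integrable_const _).indicator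
              (measurableSet_ball.inter hKm)) (integrable_const _),
            integral_indicator_const _ (measurableSet_ball.inter hKm), integral_const,
            smul_eq_mul, smul_eq_mul]; rfl
      _ ≤ 2⁻¹ + 2⁻¹ := by
          have h1 : (μ (ball x s ∩ K)).toReal ≤ (μ (ball x s)).toReal :=
            ENNReal.toReal_mono (measure_ne_top μ _) (measure_mono inter_subset_left)
          have h2 : (μ (ball x s ∩ K)).toReal * (τ₀⁻¹) ^ pP ≤ 2⁻¹ := by
            calc (μ (ball x s ∩ K)).toReal * (τ₀⁻¹) ^ pP
                ≤ (μ (ball x s)).toReal * (τ₀⁻¹) ^ pP :=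
                  mul_le_mul_of_nonneg_right h1 (by positivity)
              _ ≤ 2⁻¹ := by rw [mul_comm]; exact hcond
          have h3 : mtot * (t'/τ₀) ≤ 2⁻¹ := by
            have ht'e : t'/τ₀ = (2*mtot+2)⁻¹ := by
              rw [ht'def, mul_comm τ₀, mul_div_assoc, div_self hτ₀0.ne', mul_one]
            rw [ht'e, mul_comm, inv_mul_le_iff₀ (by positivity)]
            linarith
          linarith
      _ ≤ 1 := by norm_num
  -- combine along the sequence of shrinking balls
  set sn : ℕ → ℝ := fun n => (1 + ((n:ℝ)+1)⁻¹) * r with hsndef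
  have hsn : ∀ n : ℕ, r < sn n ∧ sn n ≤ 2*r := by
    intro n
    have h0 : (0:ℝ) < (n:ℝ)+1 := by positivity
    have h1 : ((n:ℝ)+1)⁻¹ ≤ 1 := by
      rw [inv_le_one_iff₀]; right
      have : (0:ℝ) ≤ (n:ℝ) := Nat.cast_nonneg n
      linarith
    have h2 : 0 < ((n:ℝ)+1)⁻¹ := by positivity
    constructor
    · have := mul_pos h2 hr
      rw [hsndef]; dsimp only; nlinarith
    · rw [hsndef]; dsimp only
      have := mul_le_mul_of_nonneg_right (by linarith : 1 + ((n:ℝ)+1)⁻¹ ≤ 2) hr.le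
      linarith
  set bn : ℕ → ℝ := fun n => (μ (ball x (sn n))).toReal with hbndef
  have hmono : Antitone (fun n => ball x (sn n)) := by
    intro m n hmn
    apply ball_subset_ball
    have hc1 : ((m:ℝ)+1) ≤ ((n:ℝ)+1) := by
      have : (m:ℝ) ≤ (n:ℝ) := Nat.cast_le.2 hmn
      linarith
    have h3 : ((n:ℝ)+1)⁻¹ ≤ ((m:ℝ)+1)⁻¹ := by
      apply inv_anti₀ (by positivity) hc1
    have := mul_le_mul_of_nonneg_right (by linarith : 1 + ((n:ℝ)+1)⁻¹ ≤ 1 + ((m:ℝ)+1)⁻¹) hr.le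
    exact this
  have hiInter : ⋂ n, ball x (sn n) = closedBall x r := by
    ext y
    simp only [mem_iInter, mem_ball, mem_closedBall]
    constructor
    · intro hy
      have htd : Tendsto sn atTop (𝓝 r) := by
        have h0 : Tendsto (fun n : ℕ => ((n:ℝ)+1)⁻¹) atTop (𝓝 0) := by
          have : Tendsto (fun n : ℕ => 1 / ((n:ℝ) + 1)) atTop (𝓝 0) :=
            tendsto_one_div_add_atTop_nhds_zero_nat
          simpa [one_div] using this
        have h1 := (h0.const_add 1).mul_const r
        simpa using h1
      exact ge_of_tendsto htd (Eventually.of_forall fun n => (hy n).le)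
    · intro hy n
      exact lt_of_le_of_lt hy (hsn n).1
  have hbn : Tendsto bn atTop (𝓝 b) := by
    have h1 : Tendsto (fun n => μ (ball x (sn n))) atTop (𝓝 (μ (closedBall x r))) := by
      have h2 := tendsto_measure_iInter_atTop (μ := μ)
        (fun n => measurableSet_ball.nullMeasurableSet) hmono ⟨0, measure_ne_top μ _⟩
      rwa [hiInter] at h2
    exact (ENNReal.tendsto_toReal (measure_ne_top μ _)).comp h1
  have main_n : ∀ n : ℕ, bn n ≤ 2⁻¹ → 2⁻¹ * min 1 (a ^ hM⁻¹) ≤ c * (2 * bn n) ^ pP⁻¹ := by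
    intro n hn
    have hbn0 : 0 ≤ bn n := ENNReal.toReal_nonneg
    rcases eq_or_lt_of_le hbn0 with hz | hpos
    · have hrhs : c * (2 * bn n) ^ pP⁻¹ = 0 := by
        rw [← hz, mul_zero, Real.zero_rpow (by positivity : pP⁻¹ ≠ 0), mul_zero]
      rw [hrhs]
      by_contra h0
      push_neg at h0
      set L := 2⁻¹ * min 1 (a ^ hM⁻¹) with hLdef
      have hall : ∀ t : ℝ, 0 < t → t ≤ 1 → L ≤ c * t := by
        intro t ht0 ht1
        have hcond : (t⁻¹) ^ pP * (μ (ball x (sn n))).toReal ≤ 2⁻¹ := by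
          rw [show (μ (ball x (sn n))).toReal = bn n from rfl, ← hz, mul_zero]
          norm_num
        obtain ⟨lam, hlam, hlux⟩ := claimB (sn n) t (hsn n).1 (hsn n).2 ht0 ht1 hcond
        calc L ≤ luxNorm ν h (Ψ lam (sn n)) := claimA lam (sn n) hlam (hsn n).1.le
          _ ≤ c * luxNorm μ p (Ψ lam (sn n)) := hrh _ (hΨcd _ _)
          _ ≤ c * t := mul_le_mul_of_nonneg_left hlux hc.le
      have hLpos : 0 < L := h0
      have h4 := hall (min 1 (L/(2*c))) (by positivity) (min_le_left _ _)
      have hle : c * min 1 (L/(2*c)) ≤ c * (L/(2*c)) :=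
        mul_le_mul_of_nonneg_left (min_le_right _ _) hc.le
      have heq : c * (L/(2*c)) = L/2 := by field_simp
      linarith
    · set τ₀ := (2 * bn n) ^ pP⁻¹ with hτ₀def
      have h2bn : 0 < 2 * bn n := by linarith
      have hτ₀0 : 0 < τ₀ := Real.rpow_pos_of_pos h2bn _
      have hτ₀1 : τ₀ ≤ 1 := Real.rpow_le_one (by linarith) (by linarith) (by positivity)
      have hcond : (τ₀⁻¹) ^ pP * (μ (ball x (sn n))).toReal ≤ 2⁻¹ := by
        have h1 : (τ₀⁻¹ : ℝ) = (2*bn n) ^ (-pP⁻¹) := by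
          rw [hτ₀def, ← Real.rpow_neg h2bn.le]
        have h2 : (τ₀⁻¹) ^ pP = (2*bn n)⁻¹ := by
          rw [h1, ← Real.rpow_mul h2bn.le, neg_mul, inv_mul_cancel₀ hpP0.ne',
            Real.rpow_neg_one]
        rw [h2, show (μ (ball x (sn n))).toReal = bn n from rfl, mul_inv, mul_assoc,
          inv_mul_cancel₀ (ne_of_gt hpos), mul_one]
      obtain ⟨lam, hlam, hlux⟩ := claimB (sn n) τ₀ (hsn n).1 (hsn n).2 hτ₀0 hτ₀1 hcond
      calc 2⁻¹ * min 1 (a ^ hM⁻¹) ≤ luxNorm ν h (Ψ lam (sn n)) :=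
            claimA lam (sn n) hlam (hsn n).1.le
        _ ≤ c * luxNorm μ p (Ψ lam (sn n)) := hrh _ (hΨcd _ _)
        _ ≤ c * τ₀ := mul_le_mul_of_nonneg_left hlux hc.le
  have hfinal1 : 2⁻¹ * min 1 (a ^ hM⁻¹) ≤ c * (2*b) ^ pP⁻¹ := by
    have htd : Tendsto (fun n => c * (2 * bn n) ^ pP⁻¹) atTop (𝓝 (c * (2*b) ^ pP⁻¹)) := by
      have h1 : Tendsto (fun n => 2 * bn n) atTop (𝓝 (2*b)) := hbn.const_mul 2
      exact (h1.rpow_const (Or.inr (by positivity))).const_mul c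
    have hev : ∀ᶠ n in atTop, 2⁻¹ * min 1 (a ^ hM⁻¹) ≤ c * (2 * bn n) ^ pP⁻¹ := by
      filter_upwards [hbn.eventually_lt_const (show b < 2⁻¹ by linarith)] with n hn
      exact main_n n hn.le
    exact ge_of_tendsto htd hev
  have hquarter : c * (2*b) ^ pP⁻¹ ≤ 4⁻¹ := by
    have h1 : (2*b) ^ pP⁻¹ ≤ (2*ε₁) ^ pP⁻¹ :=
      Real.rpow_le_rpow (by linarith) (by linarith) (by positivity)
    have h2 : (2*ε₁) ^ pP⁻¹ ≤ (2*ε₁) ^ M'⁻¹ := by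
      apply Real.rpow_le_rpow_of_exponent_ge' (by linarith) (by linarith) (by positivity)
      exact inv_anti₀ hpP0 hpPM
    have h3 := mul_le_mul_of_nonneg_left (le_trans h1 h2) hc.le
    linarith
  have hmin : min 1 (a ^ hM⁻¹) ≤ 2⁻¹ := by linarith
  have hminA : a ^ hM⁻¹ ≤ 2 * (c * (2*b) ^ pP⁻¹) := by
    have hlt : a ^ hM⁻¹ < 1 := by
      by_contra hge
      push_neg at hge
      rw [min_eq_left hge] at hmin
      norm_num at hmin
    rw [min_eq_right hlt.le] at hfinal1
    linarith
  have hfin2 : a ≤ (2*(c * (2*b) ^ pP⁻¹)) ^ hM := by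
    have h1 := Real.rpow_le_rpow (Real.rpow_nonneg ha0 _) hminA hhM0.le
    rwa [← Real.rpow_mul ha0, inv_mul_cancel₀ hhM0.ne', Real.rpow_one] at h1
  have hsplit : (2*(c * (2*b) ^ pP⁻¹)) ^ hM = (2*c) ^ hM * (2*b) ^ (hM/pP) := by
    rw [show 2*(c * (2*b) ^ pP⁻¹) = (2*c) * (2*b) ^ pP⁻¹ by ring,
      Real.mul_rpow (by positivity) (Real.rpow_nonneg (by linarith) _),
      ← Real.rpow_mul (by linarith : (0:ℝ) ≤ 2*b)]
    congr 1
    field_simp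
  have hsplit2 : (2*b) ^ (hM/pP) = 2 ^ (hM/pP) * b ^ (hM/pP) :=
    Real.mul_rpow (by norm_num) hb0
  have hc1 : (2*c) ^ hM ≤ (max 1 (2*c)) ^ M' := by
    calc (2*c) ^ hM ≤ (max 1 (2*c)) ^ hM :=
          Real.rpow_le_rpow (by positivity) (le_max_right _ _) hhM0.le
      _ ≤ (max 1 (2*c)) ^ M' :=
          Real.rpow_le_rpow_of_exponent_le (le_max_left _ _) hhMM
  have hc2 : (2:ℝ) ^ (hM/pP) ≤ 2 ^ M' := by
    apply Real.rpow_le_rpow_of_exponent_le (by norm_num)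
    calc hM/pP ≤ hM := div_le_self hhM0.le hpP1
      _ ≤ M' := hhMM
  calc a ≤ (2*c) ^ hM * (2 ^ (hM/pP) * b ^ (hM/pP)) := by
        rw [← hsplit2, ← hsplit]; exact hfin2
    _ ≤ (max 1 (2*c)) ^ M' * (2 ^ M' * b ^ (hM/pP)) := by
        apply mul_le_mul hc1 _ (by positivity) (by positivity)
        exact mul_le_mul_of_nonneg_right hc2 (Real.rpow_nonneg hb0 _)
    _ = ((max 1 (2*c)) ^ M' * 2 ^ M') * b ^ (hM/pP) := by ring

set_option maxHeartbeats 2000000 in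
/-- **Bonder–Silva, Lemma 3.2 (reverse Hölder implies purely atomic)**:
if `μ, ν` are finite nonnegative Borel measures on `Ω̄` with
`‖ψ‖_{L^{h(·)}_ν} ≤ c ‖ψ‖_{L^{p(·)}_μ}` for all smooth `ψ`, where
`p, h ∈ C(Ω̄)`, `p, h > 1` and `inf (h − p) > 0`, then
`ν = Σ_j ν_j δ_{x_j}` for countably many distinct points `x_j ∈ Ω̄` and
weights `ν_j > 0`. -/
theorem reverse_holder_implies_atomic (N : ℕ) (Ω : Set (EuclideanSpace ℝ (Fin N)))
    (hΩo : IsOpen Ω) (hΩb : Bornology.IsBounded Ω) (hΩne : Ω.Nonempty)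
    (μ ν : Measure (EuclideanSpace ℝ (Fin N)))
    (hμ : IsFiniteMeasure μ) (hν : IsFiniteMeasure ν)
    (hμsupp : μ (closure Ω)ᶜ = 0) (hνsupp : ν (closure Ω)ᶜ = 0)
    (p h : EuclideanSpace ℝ (Fin N) → ℝ)
    (hpc : ContinuousOn p (closure Ω)) (hhc : ContinuousOn h (closure Ω))
    (hp1 : ∀ x ∈ closure Ω, 1 < p x) (hh1 : ∀ x ∈ closure Ω, 1 < h x)
    (δ : ℝ) (hδ : 0 < δ) (hgap : ∀ x ∈ closure Ω, p x + δ ≤ h x)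
    (c : ℝ) (hc : 0 < c)
    (hrh : ∀ ψ : EuclideanSpace ℝ (Fin N) → ℝ, ContDiff ℝ (⊤ : ℕ∞) ψ →
      luxNorm ν h ψ ≤ c * luxNorm μ p ψ) :
    ∃ S : Set (EuclideanSpace ℝ (Fin N)), S.Countable ∧ S ⊆ closure Ω ∧
      ∃ w : EuclideanSpace ℝ (Fin N) → ENNReal,
        (∀ z ∈ S, 0 < w z ∧ w z ≠ ⊤) ∧
        ∀ s : Set (EuclideanSpace ℝ (Fin N)), MeasurableSet s →
          ν s = ∑' z : S, s.indicator w z := by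
  haveI := hμ; haveI := hν
  set K := closure Ω with hKdef
  have hKcl : IsClosed K := isClosed_closure
  have hKm : MeasurableSet K := hKcl.measurableSet
  have hKc : IsCompact K := Metric.isCompact_of_isClosed_isBounded hKcl hΩb.closure
  have aeKμ : ∀ᵐ y ∂μ, y ∈ K := ae_mem_of_compl_null hμsupp
  have aeKν : ∀ᵐ y ∂ν, y ∈ K := ae_mem_of_compl_null hνsupp
  -- Tietze extensions of the exponents
  obtain ⟨p', hp'⟩ := ContinuousMap.exists_restrict_eq (Y := ℝ) hKcl ⟨K.restrict p, hpc.restrict⟩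
  obtain ⟨h', hh'⟩ := ContinuousMap.exists_restrict_eq (Y := ℝ) hKcl ⟨K.restrict h, hhc.restrict⟩
  have hp'eq : ∀ y ∈ K, p' y = p y := fun y hy => DFunLike.congr_fun hp' ⟨y, hy⟩
  have hh'eq : ∀ y ∈ K, h' y = h y := fun y hy => DFunLike.congr_fun hh' ⟨y, hy⟩
  -- transfer the reverse Hölder inequality to the extended exponents
  have hrh' : ∀ ψ : EuclideanSpace ℝ (Fin N) → ℝ, ContDiff ℝ (⊤ : ℕ∞) ψ →
      luxNorm ν (⇑h') ψ ≤ c * luxNorm μ (⇑p') ψ := by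
    intro ψ hψ
    have e1 : luxNorm ν (⇑h') ψ = luxNorm ν h ψ := by
      unfold luxNorm
      congr 1
      ext τ
      simp only [Set.mem_setOf_eq]
      have : ∫ y, (|ψ y| / τ) ^ h' y ∂ν = ∫ y, (|ψ y| / τ) ^ h y ∂ν := by
        apply integral_congr_ae
        filter_upwards [aeKν] with y hy
        rw [hh'eq y hy]
      rw [this]
    have e2 : luxNorm μ (⇑p') ψ = luxNorm μ p ψ := by
      unfold luxNorm
      congr 1
      ext τ
      simp only [Set.mem_setOf_eq]
      have : ∫ y, (|ψ y| / τ) ^ p' y ∂μ = ∫ y, (|ψ y| / τ) ^ p y ∂μ := by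
        apply integral_congr_ae
        filter_upwards [aeKμ] with y hy
        rw [hp'eq y hy]
      rw [this]
    rw [e1, e2]
    exact hrh ψ hψ
  -- uniform bounds for the exponents
  obtain ⟨Mp, hMp⟩ := hKc.exists_bound_of_continuousOn hpc
  obtain ⟨Mh, hMh⟩ := hKc.exists_bound_of_continuousOn hhc
  set M' := max 1 (max Mp Mh) + δ with hM'def
  have hpM' : ∀ y ∈ K, p y ≤ M' - δ := by
    intro y hy
    have h1 : p y ≤ |p y| := le_abs_self _
    have h2 : |p y| ≤ Mp := by rw [← Real.norm_eq_abs]; exact hMp y hy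
    have h3 : Mp ≤ max 1 (max Mp Mh) := le_trans (le_max_left _ _) (le_max_right _ _)
    simp only [hM'def]; linarith
  have hhM' : ∀ y ∈ K, h y ≤ M' - δ := by
    intro y hy
    have h1 : h y ≤ |h y| := le_abs_self _
    have h2 : |h y| ≤ Mh := by rw [← Real.norm_eq_abs]; exact hMh y hy
    have h3 : Mh ≤ max 1 (max Mp Mh) := le_trans (le_max_right _ _) (le_max_right _ _)
    simp only [hM'def]; linarith
  have hM'1 : 1 ≤ M' := by
    have : (1:ℝ) ≤ max 1 (max Mp Mh) := le_max_left _ _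
    simp only [hM'def]; linarith
  have hM'0 : (0:ℝ) < M' := lt_of_lt_of_le one_pos hM'1
  -- uniform continuity of the exponents
  have hucp := (hKc.uniformContinuousOn_of_continuous hpc)
  have huch := (hKc.uniformContinuousOn_of_continuous hhc)
  rw [Metric.uniformContinuousOn_iff] at hucp huch
  obtain ⟨dp, hdp0, hdp⟩ := hucp (δ/4) (by linarith)
  obtain ⟨dh, hdh0, hdh⟩ := huch (δ/4) (by linarith)
  set r₀ := min dp dh / 3 with hr₀def
  have hr₀0 : 0 < r₀ := by
    have := lt_min hdp0 hdh0
    simp only [hr₀def]; linarith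
  -- the smallness threshold and constants
  set ε₁ := min 4⁻¹ (((4*c)⁻¹) ^ M' / 2) with hε₁def
  have hε₁0 : 0 < ε₁ := by
    apply lt_min (by norm_num)
    have : (0:ℝ) < (4*c)⁻¹ := by positivity
    have := Real.rpow_pos_of_pos this M'
    linarith
  have hε₁4 : ε₁ ≤ 4⁻¹ := min_le_left _ _
  have hε₁small : 2 * c * (2 * ε₁) ^ (M'⁻¹) ≤ 2⁻¹ := by
    have h2ε : 2 * ε₁ ≤ ((4*c)⁻¹) ^ M' := by
      have := min_le_right (4:ℝ)⁻¹ (((4*c)⁻¹) ^ M' / 2)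
      simp only [hε₁def]; linarith
    have h1 : (2*ε₁) ^ M'⁻¹ ≤ (((4*c)⁻¹) ^ M') ^ M'⁻¹ :=
      Real.rpow_le_rpow (by linarith) h2ε (by positivity)
    have h2 : (((4*c)⁻¹) ^ M') ^ M'⁻¹ = (4*c)⁻¹ := by
      rw [← Real.rpow_mul (by positivity), mul_inv_cancel₀ hM'0.ne', Real.rpow_one]
    have h3 : 2 * c * (2*ε₁) ^ M'⁻¹ ≤ 2 * c * (4*c)⁻¹ := by
      apply mul_le_mul_of_nonneg_left _ (by positivity)
      rw [← h2]; exact h1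
    have h4 : 2 * c * (4*c)⁻¹ = 2⁻¹ := by field_simp; ring
    linarith
  set θ := 1 + δ/(2*M') with hθdef
  have hθ1 : 1 < θ := by
    have : 0 < δ/(2*M') := by positivity
    simp only [hθdef]; linarith
  set C₁ := (max 1 (2*c)) ^ M' * 2 ^ M' with hC₁def
  have hC₁0 : 0 ≤ C₁ := by positivity
  -- the uniform ball estimate
  have hkey : ∀ x ∈ K, ∀ r : ℝ, 0 < r → r ≤ r₀ → (μ (closedBall x r)).toReal ≤ ε₁ →
      (ν (closedBall x r)).toReal ≤ C₁ * (μ (closedBall x r)).toReal ^ θ := by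
    intro x hx r hr hrr₀ hbsmall
    set pPx := p x + δ/4 with hpPxdef
    set hMx := h x - δ/4 with hhMxdef
    have hpx1 : 1 < p x := hp1 x hx
    have hhx : p x + δ ≤ h x := hgap x hx
    have hpPx1 : 1 ≤ pPx := by simp only [hpPxdef]; linarith
    have hpPx0 : (0:ℝ) < pPx := by linarith
    have hpPxM : pPx ≤ M' := by
      have := hpM' x hx; simp only [hpPxdef]; linarith
    have hhMx1 : 1 ≤ hMx := by simp only [hhMxdef]; linarith
    have hhMxM : hMx ≤ M' := by
      have := hhM' x hx; simp only [hhMxdef]; linarith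
    have hballx : ∀ y ∈ K, dist y x < 2 * r → p' y ≤ pPx ∧ hMx ≤ h' y := by
      intro y hy hdy
      have hdy' : dist y x < min dp dh := by
        have : 2 * r ≤ 2 * r₀ := by linarith
        have h5 : 2 * r₀ < min dp dh := by
          have := lt_min hdp0 hdh0
          simp only [hr₀def]; linarith
        linarith
      have h6 := hdp y hy x hx (lt_of_lt_of_le hdy' (min_le_left _ _))
      have h7 := hdh y hy x hx (lt_of_lt_of_le hdy' (min_le_right _ _))
      rw [Real.dist_eq] at h6 h7
      rw [hp'eq y hy, hh'eq y hy]
      constructor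
      · simp only [hpPxdef]
        have := abs_lt.1 h6
        linarith [this.1, this.2]
      · simp only [hhMxdef]
        have := abs_lt.1 h7
        linarith [(abs_lt.1 h7).1, (abs_lt.1 h7).2]
    have hmain := key_estimate μ ν K hKm hμsupp hνsupp (⇑p') (⇑h')
      p'.continuous h'.continuous
      (fun y hy => by rw [hp'eq y hy]; linarith [hp1 y hy])
      (fun y hy => by rw [hh'eq y hy]; linarith [hh1 y hy])
      M'
      (fun y hy => by rw [hp'eq y hy]; linarith [hpM' y hy])
      (fun y hy => by rw [hh'eq y hy]; linarith [hhM' y hy])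
      c hc hrh' x hx pPx hMx hpPx1 hpPxM hhMx1 hhMxM r hr hballx
      ε₁ hε₁0 hε₁4 hε₁small hbsmall
    -- convert the exponent
    have hθx : θ ≤ hMx / pPx := by
      rw [le_div_iff₀ hpPx0]
      have h1 : δ/(2*M') * pPx ≤ δ/(2*M') * M' :=
        mul_le_mul_of_nonneg_left hpPxM (by positivity)
      have h2 : δ/(2*M') * M' = δ/2 := by field_simp
      have h3 : pPx + δ/2 ≤ hMx := by
        simp only [hpPxdef, hhMxdef]; linarith
      calc θ * pPx = pPx + δ/(2*M') * pPx := by simp only [hθdef]; ring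
        _ ≤ pPx + δ/2 := by linarith
        _ ≤ hMx := h3
    have hble : (μ (closedBall x r)).toReal ^ (hMx/pPx) ≤ (μ (closedBall x r)).toReal ^ θ := by
      set m := (μ (closedBall x r)).toReal with hmdef
      have hm0 : 0 ≤ m := ENNReal.toReal_nonneg
      rcases eq_or_lt_of_le hm0 with hz | hmp
      · rw [← hz, Real.zero_rpow (by positivity : (hMx/pPx) ≠ 0),
          Real.zero_rpow (by positivity : θ ≠ 0)]
      · exact Real.rpow_le_rpow_of_exponent_ge hmp (by linarith [hε₁4]) hθx
    calc (ν (closedBall x r)).toReal ≤ C₁ * (μ (closedBall x r)).toReal ^ (hMx/pPx) := hmain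
      _ ≤ C₁ * (μ (closedBall x r)).toReal ^ θ := mul_le_mul_of_nonneg_left hble hC₁0
  -- shrinking balls converge to the point mass
  have hshrink : ∀ (ξ : Measure (EuclideanSpace ℝ (Fin N))), IsFiniteMeasure ξ →
      ∀ (z : EuclideanSpace ℝ (Fin N)) (R : ℝ), 0 < R →
      Tendsto (fun k : ℕ => (ξ (closedBall z (R * ((k:ℝ)+1)⁻¹))).toReal) atTop
        (𝓝 ((ξ {z}).toReal)) := by
    intro ξ hξ z R hR
    haveI := hξ
    have hiI : ⋂ k : ℕ, closedBall z (R * ((k:ℝ)+1)⁻¹) = {z} := by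
      ext y
      simp only [mem_iInter, mem_closedBall, mem_singleton_iff]
      constructor
      · intro hy
        have htd : Tendsto (fun k : ℕ => R * ((k:ℝ)+1)⁻¹) atTop (𝓝 0) := by
          have h0 : Tendsto (fun k : ℕ => ((k:ℝ)+1)⁻¹) atTop (𝓝 0) := by
            simpa [one_div] using (tendsto_one_div_add_atTop_nhds_zero_nat :
        Tendsto (fun n : ℕ => 1 / ((n:ℝ) + 1)) atTop (𝓝 0))
          simpa using h0.const_mul R
        have : dist y z ≤ 0 := ge_of_tendsto htd (Eventually.of_forall hy)
        rwa [← dist_le_zero]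
      · intro hy k
        rw [hy, dist_self]
        positivity
    have hmono : Antitone (fun k : ℕ => closedBall z (R * ((k:ℝ)+1)⁻¹)) := by
      intro m n hmn
      apply closedBall_subset_closedBall
      apply mul_le_mul_of_nonneg_left _ hR.le
      apply inv_anti₀ (by positivity)
      have : (m:ℝ) ≤ (n:ℝ) := Nat.cast_le.2 hmn
      linarith
    have h1 := tendsto_measure_iInter_atTop (μ := ξ)
      (fun k => measurableSet_closedBall.nullMeasurableSet) hmono ⟨0, measure_ne_top ξ _⟩
    rw [hiI] at h1
    exact (ENNReal.tendsto_toReal (measure_ne_top ξ _)).comp h1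
  -- atoms of ν are atoms of μ
  have hatom : ∀ x ∈ K, μ {x} = 0 → ν {x} = 0 := by
    intro x hx hμx
    have hμt := hshrink μ hμ x r₀ hr₀0
    have hνt := hshrink ν hν x r₀ hr₀0
    rw [hμx] at hμt
    simp only [ENNReal.toReal_zero] at hμt
    have hev : ∀ᶠ k : ℕ in atTop, (μ (closedBall x (r₀ * ((k:ℝ)+1)⁻¹))).toReal ≤ ε₁ := by
      filter_upwards [hμt.eventually_lt_const hε₁0] with k hk
      exact hk.le
    have hRHS : Tendsto (fun k : ℕ => C₁ * (μ (closedBall x (r₀ * ((k:ℝ)+1)⁻¹))).toReal ^ θ)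
        atTop (𝓝 0) := by
      have h1 := (hμt.rpow_const (Or.inr (by linarith : (0:ℝ) ≤ θ))).const_mul C₁
      rw [Real.zero_rpow (by linarith : θ ≠ 0), mul_zero] at h1
      exact h1
    have hle : (ν {x}).toReal ≤ 0 := by
      apply le_of_tendsto_of_tendsto hνt hRHS
      filter_upwards [hev] with k hk
      have hrk0 : 0 < r₀ * ((k:ℝ)+1)⁻¹ := by positivity
      have hrk1 : r₀ * ((k:ℝ)+1)⁻¹ ≤ r₀ := by
        have h5 : ((k:ℝ)+1)⁻¹ ≤ 1 := by
          rw [inv_le_one_iff₀]; right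
          have : (0:ℝ) ≤ (k:ℝ) := Nat.cast_nonneg k
          linarith
        nlinarith
      exact hkey x hx _ hrk0 hrk1 hk
    have : (ν {x}).toReal = 0 := le_antisymm hle ENNReal.toReal_nonneg
    rwa [ENNReal.toReal_eq_zero_iff, or_iff_left (measure_ne_top ν _)] at this
  -- the set of atoms of μ
  set A := {z : EuclideanSpace ℝ (Fin N) | 0 < μ {z}} with hAdef
  have hAc : A.Countable :=
    Measure.countable_meas_pos_of_disjoint_iUnion
      (As := fun z : EuclideanSpace ℝ (Fin N) => ({z} : Set (EuclideanSpace ℝ (Fin N))))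
      (fun z => measurableSet_singleton z)
      (fun i j hij => by simp [Function.onFun, hij])
  -- ν gives no mass outside the atoms of μ
  have hKA : ν (K \ A) = 0 := by
    have hbound : ∀ n : ℕ, ν (K \ A) ≤
        ENNReal.ofReal (C₁ * (((n:ℝ)+1)⁻¹) ^ (θ-1)) * (μ univ + 1) := by
      intro n
      set ε := min ε₁ ((n:ℝ)+1)⁻¹ with hεdef
      have hε0 : 0 < ε := lt_min hε₁0 (by positivity)
      set f : EuclideanSpace ℝ (Fin N) → Set ℝ :=
        fun z => {rad | 0 < rad ∧ rad ≤ r₀ ∧ (μ (closedBall z rad)).toReal ≤ ε} with hfdef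
      have hf : ∀ z ∈ K \ A, ∀ d > 0, (f z ∩ Ioo 0 d).Nonempty := by
        intro z hz d hd
        have hμz : μ {z} = 0 := by
          by_contra hne
          exact hz.2 (pos_iff_ne_zero.2 hne)
        set R := min r₀ (d/2) with hRdef
        have hR0 : 0 < R := lt_min hr₀0 (by linarith)
        have ht := hshrink μ hμ z R hR0
        rw [hμz] at ht
        simp only [ENNReal.toReal_zero] at ht
        obtain ⟨k, hk⟩ := (ht.eventually_lt_const hε0).exists
        refine ⟨R * ((k:ℝ)+1)⁻¹, ⟨by positivity, ?_, hk.le⟩, by positivity, ?_⟩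
        · have h5 : ((k:ℝ)+1)⁻¹ ≤ 1 := by
            rw [inv_le_one_iff₀]; right
            have : (0:ℝ) ≤ (k:ℝ) := Nat.cast_nonneg k
            linarith
          have h6 : R ≤ r₀ := min_le_left _ _
          nlinarith
        · have h5 : ((k:ℝ)+1)⁻¹ ≤ 1 := by
            rw [inv_le_one_iff₀]; right
            have : (0:ℝ) ≤ (k:ℝ) := Nat.cast_nonneg k
            linarith
          have h6 : R ≤ d/2 := min_le_right _ _
          nlinarith
      obtain ⟨t, rr, htc, hts, htf, htcov, htsum⟩ :=
        Besicovitch.exists_closedBall_covering_tsum_measure_le μ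
          (by norm_num : (1:ℝ≥0∞) ≠ 0) f (K \ A) hf
      have hstep : ∀ z ∈ t, ν (closedBall z (rr z)) ≤
          ENNReal.ofReal (C₁ * ε ^ (θ-1)) * μ (closedBall z (rr z)) := by
        intro z hz
        obtain ⟨hr1, hr2, hr3⟩ := htf z hz
        have hzK : z ∈ K := (hts hz).1
        have hreal : (ν (closedBall z (rr z))).toReal ≤
            C₁ * ε ^ (θ-1) * (μ (closedBall z (rr z))).toReal := by
          have h1 := hkey z hzK (rr z) hr1 hr2 (le_trans hr3 (min_le_left _ _))
          set m := (μ (closedBall z (rr z))).toReal with hmdef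
          have hm0 : 0 ≤ m := ENNReal.toReal_nonneg
          have h2 : m ^ θ ≤ ε ^ (θ-1) * m := by
            rcases eq_or_lt_of_le hm0 with hzz | hmp
            · rw [← hzz, Real.zero_rpow (by linarith : θ ≠ 0), mul_zero]
            · have h3 : m ^ θ = m ^ (θ-1) * m := by
                have h4 := Real.rpow_add hmp (θ-1) 1
                rw [Real.rpow_one] at h4
                rw [show θ-1+1 = θ by ring] at h4
                exact h4
              have h5 : m ^ (θ-1) ≤ ε ^ (θ-1) :=
                Real.rpow_le_rpow hm0 hr3 (by linarith)
              rw [h3]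
              exact mul_le_mul_of_nonneg_right h5 hm0
          calc (ν (closedBall z (rr z))).toReal ≤ C₁ * m ^ θ := h1
            _ ≤ C₁ * (ε ^ (θ-1) * m) := mul_le_mul_of_nonneg_left h2 hC₁0
            _ = C₁ * ε ^ (θ-1) * m := by ring
        calc ν (closedBall z (rr z))
            = ENNReal.ofReal ((ν (closedBall z (rr z))).toReal) :=
              (ENNReal.ofReal_toReal (measure_ne_top ν _)).symm
          _ ≤ ENNReal.ofReal (C₁ * ε ^ (θ-1) * (μ (closedBall z (rr z))).toReal) :=
              ENNReal.ofReal_le_ofReal hreal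
          _ = ENNReal.ofReal (C₁ * ε ^ (θ-1)) * ENNReal.ofReal ((μ (closedBall z (rr z))).toReal) :=
              ENNReal.ofReal_mul (by positivity)
          _ = ENNReal.ofReal (C₁ * ε ^ (θ-1)) * μ (closedBall z (rr z)) := by
              rw [ENNReal.ofReal_toReal (measure_ne_top μ _)]
      calc ν (K \ A) ≤ ν (⋃ z ∈ t, closedBall z (rr z)) := measure_mono htcov
        _ ≤ ∑' z : t, ν (closedBall z.1 (rr z.1)) := by
            apply measure_biUnion_le ν htc
        _ ≤ ∑' z : t, ENNReal.ofReal (C₁ * ε ^ (θ-1)) * μ (closedBall z.1 (rr z.1)) :=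
            ENNReal.tsum_le_tsum (fun z => hstep z.1 z.2)
        _ = ENNReal.ofReal (C₁ * ε ^ (θ-1)) * ∑' z : t, μ (closedBall z.1 (rr z.1)) :=
            ENNReal.tsum_mul_left
        _ ≤ ENNReal.ofReal (C₁ * ε ^ (θ-1)) * (μ (K \ A) + 1) := by
            apply mul_le_mul_right htsum
        _ ≤ ENNReal.ofReal (C₁ * (((n:ℝ)+1)⁻¹) ^ (θ-1)) * (μ univ + 1) := by
            apply mul_le_mul'
            · apply ENNReal.ofReal_le_ofReal
              apply mul_le_mul_of_nonneg_left _ hC₁0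
              apply Real.rpow_le_rpow hε0.le (min_le_right _ _) (by linarith)
            · exact add_le_add (measure_mono (subset_univ _)) le_rfl
    have htd : Tendsto (fun n : ℕ => ENNReal.ofReal (C₁ * (((n:ℝ)+1)⁻¹) ^ (θ-1)) * (μ univ + 1))
        atTop (𝓝 0) := by
      have h0 : Tendsto (fun n : ℕ => ((n:ℝ)+1)⁻¹) atTop (𝓝 0) := by
        simpa [one_div] using (tendsto_one_div_add_atTop_nhds_zero_nat :
        Tendsto (fun n : ℕ => 1 / ((n:ℝ) + 1)) atTop (𝓝 0))
      have h1 : Tendsto (fun n : ℕ => C₁ * (((n:ℝ)+1)⁻¹) ^ (θ-1)) atTop (𝓝 0) := by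
        have h2 := (h0.rpow_const (Or.inr (by linarith : (0:ℝ) ≤ θ-1))).const_mul C₁
        rwa [Real.zero_rpow (by linarith : θ-1 ≠ 0), mul_zero] at h2
      have h3 : Tendsto (fun n : ℕ => ENNReal.ofReal (C₁ * (((n:ℝ)+1)⁻¹) ^ (θ-1)))
          atTop (𝓝 0) := by
        have := (ENNReal.continuous_ofReal.tendsto 0).comp h1
        rwa [ENNReal.ofReal_zero] at this
      have h4 := ENNReal.Tendsto.mul_const h3
        (Or.inr (by simp [measure_ne_top] : μ univ + 1 ≠ ⊤))
      rwa [zero_mul] at h4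
    have := ge_of_tendsto htd (Eventually.of_forall hbound)
    exact le_antisymm this zero_le
  -- assemble the atomic decomposition
  set S := {z : EuclideanSpace ℝ (Fin N) | ν {z} ≠ 0} with hSdef
  have hSsub : S ⊆ K ∩ A := by
    intro z hz
    have hzK : z ∈ K := by
      by_contra hzK
      exact hz (measure_mono_null (singleton_subset_iff.2 hzK) hνsupp)
    refine ⟨hzK, ?_⟩
    by_contra hzA
    have hμz : μ {z} = 0 := by
      by_contra hne
      exact hzA (pos_iff_ne_zero.2 hne)
    exact hz (hatom z hzK hμz)
  have hSc : S.Countable := hAc.mono (fun z hz => (hSsub hz).2)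
  have hSK : S ⊆ K := fun z hz => (hSsub hz).1
  have hSm : MeasurableSet S := hSc.measurableSet
  have hνSc : ν Sᶜ = 0 := by
    have hsub : Sᶜ ⊆ Kᶜ ∪ ((K \ A) ∪ (A \ S)) := by
      intro z hz
      by_cases hzK : z ∈ K
      · by_cases hzA : z ∈ A
        · exact Or.inr (Or.inr ⟨hzA, hz⟩)
        · exact Or.inr (Or.inl ⟨hzK, hzA⟩)
      · exact Or.inl hzK
    have hAS : ν (A \ S) = 0 := by
      have hcnt : (A \ S).Countable := hAc.mono diff_subset
      rw [← biUnion_of_singleton (A \ S)]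
      rw [measure_biUnion_null_iff hcnt]
      intro z hz
      have : z ∉ S := hz.2
      rw [hSdef] at this
      simpa using this
    refine le_antisymm ?_ zero_le
    calc ν Sᶜ ≤ ν (Kᶜ ∪ ((K \ A) ∪ (A \ S))) := measure_mono hsub
      _ ≤ ν Kᶜ + (ν (K \ A) + ν (A \ S)) :=
          le_trans (measure_union_le _ _) (by
            exact add_le_add le_rfl (measure_union_le _ _))
      _ = 0 := by rw [hνsupp, hKA, hAS]; simp
  refine ⟨S, hSc, hSK, fun z => ν {z}, ?_, ?_⟩
  · intro z hz
    exact ⟨pos_iff_ne_zero.2 hz, measure_ne_top ν _⟩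
  · intro s hs
    have h1 : ν s = ν (s ∩ S) := by
      have h2 := measure_inter_add_diff (μ := ν) s hSm
      have h3 : ν (s \ S) = 0 :=
        measure_mono_null (fun z hz => hz.2) hνSc
      rw [← h2, h3, add_zero]
    have h2 : ν (s ∩ S) = ∑' z : ↥(s ∩ S), ν {z.1} := by
      have hcnt : (s ∩ S).Countable := hSc.mono inter_subset_right
      conv_lhs => rw [← biUnion_of_singleton (s ∩ S)]
      rw [measure_biUnion hcnt ?_ (fun z _ => measurableSet_singleton z)]
      intro z _ w _ hzw
      simp [Set.disjoint_singleton, hzw]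
    have h3 : ∑' z : ↥S, s.indicator (fun z => ν {z}) z.1 = ∑' z : ↥(s ∩ S), ν {z.1} := by
      rw [tsum_subtype S (s.indicator fun z => ν {z}),
        tsum_subtype (s ∩ S) (fun z => ν {z})]
      congr 1
      funext z
      rw [Set.indicator_indicator, Set.inter_comm]
    rw [h1, h2, ← h3]
end
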